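/- arXiv:2406.04885 — 8 statements merged into one kernel-verified Lean document; each statement's English description precedes it below -/
import Mathlib

section
/- Let L be a Lie algebra over ℂ and let I be a Lie ideal of L such that the centralizer of I in L is contained in I (i.e., every x ∈ L with ⁅x, y⁆ = 0 for all y ∈ I belongs to I). Let τ be a Lie algebra automorphism of L of finite order (τ^n = id for some n ≥ 1). Then τ = id if and only if the restriction of τ to I is the identity. -/
/-!
If `τ` fixes the ideal `I` pointwise, then `d = τ x - x` commutes with `I`, so `d ∈ I` and
`τ d = d`. Hence `τ^[k] x = x + k • d`; finite order gives `n • d = 0`, so `d = 0` in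
characteristic zero.
-/

theorem lie_apply_sub_self_eq_zero_of_forall_mem_eq {R L : Type*} [CommRing R] [LieRing L]
    [LieAlgebra R L] {I : LieIdeal R L} (τ : L →ₗ⁅R⁆ L) (hτ : ∀ y ∈ I, τ y = y)
    (x : L) {y : L} (hy : y ∈ I) : ⁅τ x - x, y⁆ = 0 := by
  have hτxy : ⁅τ x, y⁆ = ⁅x, y⁆ := calc
    ⁅τ x, y⁆ = ⁅τ x, τ y⁆ := by rw [hτ y hy]
    _ = τ ⁅x, y⁆ := (τ.map_lie x y).symm
    _ = ⁅x, y⁆ := hτ _ (I.lie_mem hy)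
  rw [sub_lie, hτxy, sub_self]

section Iterate

variable {M F : Type*} [FunLike F M M]

theorem iterate_apply_eq_add_nsmul [AddMonoid M] [AddMonoidHomClass F M M] (f : F)
    {x d : M} (hd : f d = d) (hx : f x = x + d) (k : ℕ) : (⇑f)^[k] x = x + k • d := by
  induction k with
  | zero => simp
  | succ k ih =>
    rw [Function.iterate_succ_apply', ih, map_add, map_nsmul, hd, hx, succ_nsmul', add_assoc]

theorem apply_eq_self_of_iterate_eq_self [AddCommGroup M] [IsAddTorsionFree M]
    [AddMonoidHomClass F M M] (f : F) {x : M} (hfix : f (f x - x) = f x - x) {n : ℕ}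
    (hn : n ≠ 0) (hfin : (⇑f)^[n] x = x) : f x = x := by
  have hnd : n • (f x - x) = 0 := by
    rwa [iterate_apply_eq_add_nsmul f hfix (add_sub_cancel x (f x)).symm, add_eq_left] at hfin
  exact sub_eq_zero.mp ((nsmul_eq_zero_iff.mp hnd).resolve_right hn)

end Iterate

/-- Let `L` be a Lie algebra over `ℂ` and `I` a Lie ideal of `L` such that the
centralizer of `I` in `L` is contained in `I`.  Let `τ` be a Lie algebra automorphism of `L`
of finite order.  Then `τ = id` iff the restriction of `τ` to `I` is the identity. -/
theorem stmt0 (L : Type*) [LieRing L] [LieAlgebra ℂ L] (I : LieIdeal ℂ L)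
    (hcent : ∀ x : L, (∀ y ∈ I, ⁅x, y⁆ = 0) → x ∈ I)
    (τ : L ≃ₗ⁅ℂ⁆ L) (n : ℕ) (hn : 1 ≤ n) (hfin : ∀ x : L, (⇑τ)^[n] x = x) :
    (∀ x : L, τ x = x) ↔ (∀ x ∈ I, τ x = x) := by
  refine ⟨fun h x _ ↦ h x, fun h x ↦ ?_⟩
  have : IsAddTorsionFree L := .of_isTorsionFree ℂ L
  have hdI : τ x - x ∈ I :=
    hcent _ fun y hy ↦ lie_apply_sub_self_eq_zero_of_forall_mem_eq τ.toLieHom h x hy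
  exact apply_eq_self_of_iterate_eq_self τ (h _ hdI) (by omega) (hfin x)
end

section
/- Let L be a Lie algebra over ℂ and let I be a Lie ideal of L whose centralizer in L is contained in I. Suppose I is generated as a Lie subalgebra by elements e_j, f_j (j ∈ J), where for each j there is h_j ∈ L with ⁅e_j, f_j⁆ = h_j, ⁅h_j, e_j⁆ = 2e_j, ⁅h_j, f_j⁆ = −2f_j, and e_j ≠ 0. Let τ be a Lie algebra automorphism of L of finite order such that for every j, τ(e_j) is a scalar multiple of f_j and τ(f_j) is a scalar multiple of e_j. Then τ² = id. -/
/-!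
On an `sl₂`-triple `(e, h, f)`, an automorphism with `τ e = c • f` and `τ f = d • e` sends `h` to
`-(c d) h`; comparing `τ ⁅h, e⁆ = 2 c f` with `⁅τ h, τ e⁆ = 2 c² d f` forces `c d = 1`, so `τ²` fixes
every generator and hence all of `I`. For `y ∈ I` we then get `⁅τ² x, y⁆ = τ² ⁅x, y⁆ = ⁅x, y⁆`, so
`τ² x - x` centralizes `I` and lies in `I`. Thus `σ = τ²` satisfies `(σ - 1)² = 0`, whence
`σⁿ = 1 + n (σ - 1)`; since `σ` has finite order and we are in characteristic zero, `σ = 1`.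
-/

theorem add_one_pow_of_sq_eq_zero {R : Type*} [Ring R] {a : R} (ha : a ^ 2 = 0) (n : ℕ) :
    (1 + a) ^ n = 1 + n • a := by
  induction n with
  | zero => simp
  | succ n ih =>
    have haa : a * a = 0 := by rw [← sq, ha]
    rw [pow_succ, ih]
    simp only [add_mul, mul_add, one_mul, mul_one, smul_mul_assoc, haa, smul_zero, succ_nsmul]
    abel

theorem eq_one_of_pow_eq_one_of_sub_one_sq_eq_zero {R : Type*} [Ring R] [IsAddTorsionFree R]
    {u : R} {n : ℕ} (hn : n ≠ 0) (hpow : u ^ n = 1) (hu : (u - 1) ^ 2 = 0) : u = 1 := by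
  have h : n • (u - 1) = n • 0 := by
    have := add_one_pow_of_sq_eq_zero hu n
    rwa [add_sub_cancel, hpow, left_eq_add, ← nsmul_zero n] at this
  exact sub_eq_zero.mp (nsmul_right_injective hn h)

namespace LieHom

variable {R L L' : Type*} [CommRing R] [LieRing L] [LieAlgebra R L] [LieRing L'] [LieAlgebra R L']

theorem eqOn_lieSpan {f g : L →ₗ⁅R⁆ L'} {s : Set L} (h : Set.EqOn f g s) :
    Set.EqOn f g (LieSubalgebra.lieSpan R L s) := by
  intro _ hx
  induction hx using LieSubalgebra.lieSpan_induction with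
  | mem x hx => exact h hx
  | zero => simp
  | add x y _ _ hx hy => simp [hx, hy]
  | smul t x _ hx => simp [hx]
  | lie x y _ _ hx hy => simp [hx, hy]

theorem lie_sub_self_eq_zero_of_eqOn_ideal (σ : L →ₗ⁅R⁆ L) {I : LieIdeal R L}
    (hσ : ∀ y ∈ I, σ y = y) (x : L) {y : L} (hy : y ∈ I) : ⁅σ x - x, y⁆ = 0 := by
  have hxy : σ ⁅x, y⁆ = ⁅x, y⁆ := hσ _ (lie_mem_right R L I x y hy)
  rw [sub_lie, ← hσ y hy, ← map_lie, hσ y hy, hxy, sub_self]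

theorem sub_one_sq_eq_zero_of_eqOn_ideal (σ : L →ₗ⁅R⁆ L) {I : LieIdeal R L}
    (hcent : ∀ x : L, (∀ y ∈ I, ⁅x, y⁆ = 0) → x ∈ I) (hσ : ∀ y ∈ I, σ y = y) :
    ((σ : L →ₗ[R] L) - 1) ^ 2 = 0 := by
  ext x
  have hmem : σ x - x ∈ I := hcent _ fun y hy ↦ lie_sub_self_eq_zero_of_eqOn_ideal σ hσ x hy
  simp [sq, hσ _ hmem]

end LieHom

namespace LieEquiv

variable {K L : Type*} [Field K] [LieRing L] [LieAlgebra K L]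

theorem mul_eq_one_of_sl2Triple [NeZero (2 : K)] (τ : L ≃ₗ⁅K⁆ L) {e f h : L} (he : e ≠ 0)
    (hef : ⁅e, f⁆ = h) (hhe : ⁅h, e⁆ = (2 : K) • e) (hhf : ⁅h, f⁆ = (-2 : K) • f) {c d : K}
    (hc : τ e = c • f) (hd : τ f = d • e) : c * d = 1 := by
  have hτe : τ e ≠ 0 := by simpa using he
  have hc0 : c ≠ 0 := by rintro rfl; simp [hc] at hτe
  have hf0 : f ≠ 0 := by rintro rfl; simp [hc] at hτe
  have hτh : τ h = (-(c * d)) • h := by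
    rw [← hef, map_lie, hc, hd, smul_lie, lie_smul, ← lie_skew, smul_smul, smul_neg, neg_smul]
  have hτhe := congrArg τ hhe
  rw [map_lie, hτh, hc, map_smul, hc, smul_lie, lie_smul, hhf] at hτhe
  have : ((2 * c) * (c * d - 1)) • f = 0 := by linear_combination (norm := module) hτhe
  simpa [two_ne_zero, hf0, hc0, sub_eq_zero] using this

theorem apply_apply_eq_self_of_sl2Triple [NeZero (2 : K)] (τ : L ≃ₗ⁅K⁆ L) {e f h : L}
    (he : e ≠ 0) (hef : ⁅e, f⁆ = h) (hhe : ⁅h, e⁆ = (2 : K) • e) (hhf : ⁅h, f⁆ = (-2 : K) • f)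
    {c d : K} (hc : τ e = c • f) (hd : τ f = d • e) : τ (τ e) = e ∧ τ (τ f) = f := by
  have hcd := mul_eq_one_of_sl2Triple τ he hef hhe hhf hc hd
  constructor
  · rw [hc, map_smul, hd, smul_smul, hcd, one_smul]
  · rw [hd, map_smul, hc, smul_smul, mul_comm, hcd, one_smul]

end LieEquiv

/-- Let `I` be a Lie ideal of a complex Lie algebra `L` whose centralizer in `L` is
contained in `I`, and suppose `I` is generated as a Lie subalgebra by elements `e j, f j` which
form `sl₂`-triples `(e j, h j, f j)` with `e j ≠ 0`.  If `τ` is a finite-order automorphism of `L`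
with `τ (e j)` a scalar multiple of `f j` and `τ (f j)` a scalar multiple of `e j` for all `j`,
then `τ² = id`. -/
theorem stmt2 (L : Type*) [LieRing L] [LieAlgebra ℂ L] (I : LieIdeal ℂ L)
    (hcent : ∀ x : L, (∀ y ∈ I, ⁅x, y⁆ = 0) → x ∈ I)
    (J : Type*) (e f h : J → L)
    (hgen : ∀ x : L, x ∈ I ↔ x ∈ LieSubalgebra.lieSpan ℂ L (Set.range e ∪ Set.range f))
    (hne : ∀ j, e j ≠ 0)
    (hef : ∀ j, ⁅e j, f j⁆ = h j)
    (hhe : ∀ j, ⁅h j, e j⁆ = (2 : ℂ) • e j)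
    (hhf : ∀ j, ⁅h j, f j⁆ = (-2 : ℂ) • f j)
    (τ : L ≃ₗ⁅ℂ⁆ L) (n : ℕ) (hn : 1 ≤ n) (hfin : ∀ x : L, (⇑τ)^[n] x = x)
    (hτe : ∀ j, ∃ c : ℂ, τ (e j) = c • f j)
    (hτf : ∀ j, ∃ c : ℂ, τ (f j) = c • e j) :
    ∀ x : L, τ (τ x) = x := by
  let σ : L →ₗ⁅ℂ⁆ L := (τ : L →ₗ⁅ℂ⁆ L).comp τ
  have hgens : Set.EqOn σ (LieHom.id : L →ₗ⁅ℂ⁆ L) (Set.range e ∪ Set.range f) := by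
    rintro _ (⟨j, rfl⟩ | ⟨j, rfl⟩) <;>
      obtain ⟨c, hc⟩ := hτe j <;> obtain ⟨d, hd⟩ := hτf j
    · exact (τ.apply_apply_eq_self_of_sl2Triple (hne j) (hef j) (hhe j) (hhf j) hc hd).1
    · exact (τ.apply_apply_eq_self_of_sl2Triple (hne j) (hef j) (hhe j) (hhf j) hc hd).2
  have hσI : ∀ y ∈ I, σ y = y := fun y hy ↦ LieHom.eqOn_lieSpan hgens ((hgen y).mp hy)
  have hpow : (σ : Module.End ℂ L) ^ n = 1 := by
    ext x
    rw [Module.End.pow_apply]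
    change (⇑τ ∘ ⇑τ)^[n] x = x
    rw [(Function.Commute.refl ⇑τ).comp_iterate, Function.comp_apply, hfin, hfin]
  have : IsAddTorsionFree (Module.End ℂ L) := .of_isTorsionFree ℂ _
  have hσ := eq_one_of_pow_eq_one_of_sub_one_sq_eq_zero (by omega) hpow
    (σ.sub_one_sq_eq_zero_of_eqOn_ideal hcent hσI)
  exact fun x ↦ LinearMap.congr_fun hσ x
end

section
/- Let L be a Lie algebra over ℂ with a direct sum decomposition L = ⊕_{a∈A} L_a indexed by an abelian group A, satisfying ⁅L_a, L_b⁆ ⊆ L_{a+b}. Let R = {a ∈ A : L_a ≠ 0} and suppose R is partitioned as R = R⁰ ⊎ R^× with 0 ∈ R⁰, R⁰ = −R⁰ and R^× = −R^×. Assume: (1) ⁅L_α, L_β⁆ ≠ 0 whenever α ∈ R^×, β ∈ R and α + β ∈ R; and (2) for every σ ∈ R⁰ there exists α ∈ R^× with α + σ ∈ R^×. Let Ψ be a Lie algebra automorphism of L that acts on each L_a (a ∈ R) as multiplication by a scalar η_a ∈ ℂˣ, with η_0 = 1. Then: η_{α+β} = η_α·η_β whenever α ∈ R^×, β ∈ R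 and α + β ∈ R; η_{−a} = η_a^{−1} for every a ∈ R; and if Ψ^m = id for some m ≥ 1 then η_a^m = 1 for all a ∈ R. -/
/-!
Apply `Ψ` to a non-zero bracket `⁅x, y⁆` with `x ∈ L α`, `y ∈ L β`: it scales by `η (α + β)` on
one side and by `η α * η β` on the other, so `η` is multiplicative along every sum `α + β` with
`α ∈ R^×`. For `a ∈ R^×` the sum `a + (-a) = 0` gives `η a * η (-a) = η 0 = 1`. An isotropic `σ`
cannot be paired with `-σ` this way; instead choose `α ∈ R^×` with `α + σ ∈ R^×` and go
`α ↦ α + σ ↦ α`, which gives `η α = η α * η σ * η (-σ)`. Finally `Ψ^m = id` forces `(η a)^m = 1` on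
any non-zero `x ∈ L a`.
-/

theorem LieHom.eq_mul_of_lie_ne_zero {R L : Type*} [CommRing R] [IsCancelMulZero R] [LieRing L]
    [LieAlgebra R L] [Module.IsTorsionFree R L] (f : L →ₗ⁅R⁆ L) {x y : L} {c d e : R}
    (hx : f x = c • x) (hy : f y = d • y) (hxy : f ⁅x, y⁆ = e • ⁅x, y⁆) (hne : ⁅x, y⁆ ≠ 0) :
    e = c * d :=
  smul_left_injective R hne <| by
    simp only [← hxy, f.map_lie, hx, hy, smul_lie, lie_smul, smul_smul, mul_comm]

theorem Module.End.HasEigenvector.pow_eq_one_of_iterate_eq_self {R M : Type*} [CommRing R]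
    [IsCancelMulZero R] [AddCommGroup M] [Module R M] [Module.IsTorsionFree R M]
    {f : Module.End R M} {μ : R} {x : M} (hx : f.HasEigenvector μ x) {m : ℕ}
    (hm : f^[m] x = x) : μ ^ m = 1 :=
  smul_left_injective R (hasEigenvector_iff.mp hx).2 <| by
    change μ ^ m • x = (1 : R) • x
    rw [one_smul, ← hx.pow_apply, Module.End.pow_apply, hm]

def IsCoreCharacter {A G : Type*} [AddCommGroup A] [Mul G] (R0 Rx : Set A) (η : A → G) : Prop :=
  ∀ α ∈ Rx, ∀ β ∈ R0 ∪ Rx, α + β ∈ R0 ∪ Rx → η (α + β) = η α * η β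

namespace IsCoreCharacter

variable {A G : Type*} [AddCommGroup A] [Group G] {R0 Rx : Set A} {η : A → G}

theorem map_neg_of_mem_right (hη : IsCoreCharacter R0 Rx η) (h0 : 0 ∈ R0) (hη0 : η 0 = 1)
    {a : A} (ha : a ∈ Rx) (hna : -a ∈ Rx) : η (-a) = (η a)⁻¹ := by
  refine eq_inv_of_mul_eq_one_right ?_
  rw [← hη a ha (-a) (Or.inr hna) (by simpa using Or.inl h0), add_neg_cancel, hη0]

theorem map_neg_of_mem_left (hη : IsCoreCharacter R0 Rx η) {σ α : A} (hσ : σ ∈ R0)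
    (hnσ : -σ ∈ R0) (hα : α ∈ Rx) (hασ : α + σ ∈ Rx) : η (-σ) = (η σ)⁻¹ := by
  refine eq_inv_of_mul_eq_one_right (mul_left_cancel (a := η α) ?_)
  calc η α * (η σ * η (-σ)) = η (α + σ + -σ) := by
        rw [hη _ hασ _ (Or.inl hnσ) (by simpa using Or.inr hα), hη _ hα _ (Or.inl hσ) (Or.inr hασ),
          mul_assoc]
    _ = η α * 1 := by rw [add_neg_cancel_right, mul_one]

end IsCoreCharacter

theorem stmt4_general (A : Type*) [AddCommGroup A]
    (L : Type*) [LieRing L] [LieAlgebra ℂ L]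
    (Lgr : A → Submodule ℂ L)
    (hbr : ∀ a b : A, ∀ x ∈ Lgr a, ∀ y ∈ Lgr b, ⁅x, y⁆ ∈ Lgr (a + b))
    (R0 Rx : Set A)
    (hR : R0 ∪ Rx = {a : A | Lgr a ≠ ⊥})
    (h0 : (0 : A) ∈ R0)
    (hR0neg : ∀ a ∈ R0, -a ∈ R0) (hRxneg : ∀ a ∈ Rx, -a ∈ Rx)
    (hnz : ∀ α ∈ Rx, ∀ β ∈ R0 ∪ Rx, α + β ∈ R0 ∪ Rx →
      ∃ x ∈ Lgr α, ∃ y ∈ Lgr β, ⁅x, y⁆ ≠ 0)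
    (hnoniso : ∀ σ ∈ R0, ∃ α ∈ Rx, α + σ ∈ Rx)
    (Ψ : L ≃ₗ⁅ℂ⁆ L) (η : A → ℂˣ)
    (hΨ : ∀ a ∈ R0 ∪ Rx, ∀ x ∈ Lgr a, Ψ x = (η a : ℂ) • x)
    (hη0 : η 0 = 1) :
    (∀ α ∈ Rx, ∀ β ∈ R0 ∪ Rx, α + β ∈ R0 ∪ Rx → η (α + β) = η α * η β) ∧
    (∀ a ∈ R0 ∪ Rx, η (-a) = (η a)⁻¹) ∧
    (∀ m : ℕ, 1 ≤ m → (∀ x : L, (⇑Ψ)^[m] x = x) → ∀ a ∈ R0 ∪ Rx, (η a) ^ m = 1) := by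
  have hη : IsCoreCharacter R0 Rx η := fun α hα β hβ hαβ => by
    obtain ⟨x, hx, y, hy, hxy⟩ := hnz α hα β hβ hαβ
    exact Units.ext <| Ψ.toLieHom.eq_mul_of_lie_ne_zero (hΨ α (Or.inr hα) x hx) (hΨ β hβ y hy)
      (hΨ _ hαβ _ (hbr α β x hx y hy)) hxy
  refine ⟨hη, fun a ha => ?_, fun m _ hid a ha => ?_⟩
  · rcases ha with hσ | ha
    · obtain ⟨α, hα, hασ⟩ := hnoniso a hσ
      exact hη.map_neg_of_mem_left hσ (hR0neg a hσ) hα hασ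
    · exact hη.map_neg_of_mem_right h0 hη0 ha (hRxneg a ha)
  · obtain ⟨x, hx, hx0⟩ := Submodule.exists_mem_ne_zero_of_ne_bot (hR.subset ha)
    have hvec : Module.End.HasEigenvector (Ψ : Module.End ℂ L) (η a) x :=
      Module.End.hasEigenvector_iff.mpr ⟨Module.End.mem_eigenspace_iff.mpr (hΨ a ha x hx), hx0⟩
    exact Units.ext <| by simpa using hvec.pow_eq_one_of_iterate_eq_self (hid x)

/-- Let `L = ⊕_{a ∈ A} L a` be a complex Lie algebra graded by an abelian group `A`
with `⁅L a, L b⁆ ⊆ L (a+b)`, let `R = {a | L a ≠ ⊥} = R⁰ ⊎ R^×` with `0 ∈ R⁰`, both parts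
symmetric, `⁅L α, L β⁆ ≠ 0` whenever `α ∈ R^×`, `β, α+β ∈ R`, and every `σ ∈ R⁰` non-isolated.
If `Ψ` is an automorphism acting on each `L a` (`a ∈ R`) as the scalar `η a ∈ ℂˣ` with `η 0 = 1`,
then `η` is multiplicative along core sums, `η (-a) = (η a)⁻¹` on `R`, and `Ψ^m = id` forces
`(η a)^m = 1` on `R`. -/
theorem stmt4 (A : Type*) [AddCommGroup A] [DecidableEq A]
    (L : Type*) [LieRing L] [LieAlgebra ℂ L]
    (Lgr : A → Submodule ℂ L)
    (hdec : DirectSum.IsInternal Lgr)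
    (hbr : ∀ a b : A, ∀ x ∈ Lgr a, ∀ y ∈ Lgr b, ⁅x, y⁆ ∈ Lgr (a + b))
    (R0 Rx : Set A)
    (hR : R0 ∪ Rx = {a : A | Lgr a ≠ ⊥}) (hdisj : Disjoint R0 Rx)
    (h0 : (0 : A) ∈ R0)
    (hR0neg : ∀ a ∈ R0, -a ∈ R0) (hRxneg : ∀ a ∈ Rx, -a ∈ Rx)
    (hnz : ∀ α ∈ Rx, ∀ β ∈ R0 ∪ Rx, α + β ∈ R0 ∪ Rx →
      ∃ x ∈ Lgr α, ∃ y ∈ Lgr β, ⁅x, y⁆ ≠ 0)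
    (hnoniso : ∀ σ ∈ R0, ∃ α ∈ Rx, α + σ ∈ Rx)
    (Ψ : L ≃ₗ⁅ℂ⁆ L) (η : A → ℂˣ)
    (hΨ : ∀ a ∈ R0 ∪ Rx, ∀ x ∈ Lgr a, Ψ x = (η a : ℂ) • x)
    (hη0 : η 0 = 1) :
    (∀ α ∈ Rx, ∀ β ∈ R0 ∪ Rx, α + β ∈ R0 ∪ Rx → η (α + β) = η α * η β) ∧
    (∀ a ∈ R0 ∪ Rx, η (-a) = (η a)⁻¹) ∧
    (∀ m : ℕ, 1 ≤ m → (∀ x : L, (⇑Ψ)^[m] x = x) → ∀ a ∈ R0 ∪ Rx, (η a) ^ m = 1) :=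
  stmt4_general A L Lgr hbr R0 Rx hR h0 hR0neg hRxneg hnz hnoniso Ψ η hΨ hη0
end

section
/- Let R be the set of roots of a finite reduced crystallographic root system in a finite-dimensional real vector space, with reflections w_α(x) = x − ⟨x, α^∨⟩α for α ∈ R. Let n ≥ 1 and α₁, …, α_{n+1} ∈ R. Then there exist m ≥ 1, roots β₁, …, β_m each belonging to {α₁, …, α_{n+1}}, and signs ε₁, …, ε_m ∈ {1, −1} such that w_{α₁}∘⋯∘w_{α_n}(α_{n+1}) = ε₁β₁ + ⋯ + ε_mβ_m and, for every 1 ≤ k ≤ m, the partial sum ε₁β₁ + ⋯ + ε_kβ_k lies in R. -/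
/-!
Reflecting a root `x` in a root `a` subtracts `⟨x, a^∨⟩ • a`, and every vector of the `a`-string
from `x` to `w_a x` is a root. So a chain of signed roots with all partial sums in `R` ending at `x`
extends, one step `±a` at a time, to such a chain ending at `w_a x`; the theorem follows by
induction over the reflections, starting from the one-term chain `α_{n+1}`.
-/

open scoped RealInnerProductSpace

section

variable {V : Type*} [NormedAddCommGroup V] [InnerProductSpace ℝ V]

/-- The Cartan number `⟨x, a^∨⟩`. -/
noncomputable def cartanPairing (x a : V) : ℝ := 2 * ⟪x, a⟫ / ⟪a, a⟫

noncomputable def rootReflection (a x : V) : V := x - cartanPairing x a • a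

structure IsReducedRootSet (R : Set V) : Prop where
  zero_notMem : (0 : V) ∉ R
  rootReflection_mem : ∀ a ∈ R, ∀ b ∈ R, rootReflection a b ∈ R
  cartanPairing_int : ∀ a ∈ R, ∀ b ∈ R, ∃ k : ℤ, cartanPairing b a = k
  reduced : ∀ a ∈ R, ∀ c : ℝ, c • a ∈ R → c = 1 ∨ c = -1

section CartanPairing

variable {a x : V}

lemma cartanPairing_smul_left (c : ℝ) (ha : a ≠ 0) : cartanPairing (c • a) a = 2 * c := by
  have : ⟪a, a⟫ ≠ 0 := inner_self_ne_zero.mpr ha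
  simp only [cartanPairing, real_inner_smul_left]
  field_simp

lemma cartanPairing_sub_smul (t : ℝ) (ha : a ≠ 0) :
    cartanPairing (x - t • a) a = cartanPairing x a - 2 * t := by
  have : ⟪a, a⟫ ≠ 0 := inner_self_ne_zero.mpr ha
  simp only [cartanPairing, inner_sub_left, real_inner_smul_left]
  field_simp

lemma cartanPairing_neg_right : cartanPairing x (-a) = -cartanPairing x a := by
  simp only [cartanPairing, inner_neg_right, inner_neg_left, neg_neg]
  ring

lemma cartanPairing_pos_iff (ha : a ≠ 0) : 0 < cartanPairing x a ↔ 0 < ⟪x, a⟫ := by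
  have : 0 < ⟪a, a⟫ := real_inner_self_pos.mpr ha
  rw [cartanPairing, div_pos_iff_of_pos_right this]
  constructor <;> intro h <;> linarith

lemma rootReflection_smul (c : ℝ) (ha : a ≠ 0) : rootReflection a (c • a) = (-c) • a := by
  rw [rootReflection, cartanPairing_smul_left c ha]
  module

lemma inner_sq_lt_of_forall_ne_smul (ha : a ≠ 0) (hx : ∀ c : ℝ, x ≠ c • a) :
    ⟪x, a⟫ ^ 2 < ⟪a, a⟫ * ⟪x, x⟫ := by
  have hne : |⟪a, x⟫| ≠ ‖a‖ * ‖x‖ := fun h => by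
    obtain ha' | ⟨c, hc⟩ := (norm_inner_eq_norm_tfae ℝ a x).out 0 2 |>.mp h
    exacts [ha ha', hx c hc]
  have hlt : |⟪a, x⟫| < ‖a‖ * ‖x‖ := (abs_real_inner_le_norm a x).lt_of_ne hne
  calc ⟪x, a⟫ ^ 2 = |⟪a, x⟫| ^ 2 := by rw [sq_abs, real_inner_comm]
    _ < (‖a‖ * ‖x‖) ^ 2 := by gcongr
    _ = ⟪a, a⟫ * ⟪x, x⟫ := by rw [real_inner_self_eq_norm_sq, real_inner_self_eq_norm_sq]; ring

lemma cartanPairing_mul_cartanPairing_lt_four (ha : a ≠ 0) (hx : ∀ c : ℝ, x ≠ c • a) :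
    cartanPairing x a * cartanPairing a x < 4 := by
  have hx0 : x ≠ 0 := by simpa using hx 0
  have hA : 0 < ⟪a, a⟫ := real_inner_self_pos.mpr ha
  have hX : 0 < ⟪x, x⟫ := real_inner_self_pos.mpr hx0
  have hsq := inner_sq_lt_of_forall_ne_smul ha hx
  rw [cartanPairing, cartanPairing, real_inner_comm x a, div_mul_div_comm,
    div_lt_iff₀ (by positivity)]
  linarith

end CartanPairing

namespace IsReducedRootSet

variable {R : Set V} {a b : V}

lemma ne_zero (hR : IsReducedRootSet R) (ha : a ∈ R) : a ≠ 0 :=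
  fun h => hR.zero_notMem (h ▸ ha)

lemma neg_mem (hR : IsReducedRootSet R) (ha : a ∈ R) : -a ∈ R := by
  have h := hR.rootReflection_mem a ha ((1 : ℝ) • a) (by rwa [one_smul])
  rwa [rootReflection_smul 1 (hR.ne_zero ha), neg_smul, one_smul] at h

lemma smul_mem_of_eq_one_or_eq_neg_one (hR : IsReducedRootSet R) (ha : a ∈ R) {s : ℝ}
    (hs : s = 1 ∨ s = -1) : s • a ∈ R := by
  rcases hs with rfl | rfl
  · rwa [one_smul]
  · rw [neg_one_smul]; exact hR.neg_mem ha

/-- One of the two Cartan integers of `a` and `b` is `1`: both are positive and their product is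
less than `4`. -/
lemma sub_mem_of_cartanPairing_pos (hR : IsReducedRootSet R) (ha : a ∈ R) (hb : b ∈ R)
    (hba : ∀ c : ℝ, b ≠ c • a) (hpos : 0 < cartanPairing b a) : b - a ∈ R := by
  have ha0 := hR.ne_zero ha
  have hb0 := hR.ne_zero hb
  obtain ⟨k, hk⟩ := hR.cartanPairing_int a ha b hb
  obtain ⟨l, hl⟩ := hR.cartanPairing_int b hb a ha
  have hk0 : 0 < k := by exact_mod_cast hk ▸ hpos
  have hl0 : 0 < l := by
    have : 0 < cartanPairing a b := by
      rw [cartanPairing_pos_iff hb0, real_inner_comm]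
      exact (cartanPairing_pos_iff ha0).mp hpos
    exact_mod_cast hl ▸ this
  have hkl : k * l < 4 := by
    have := cartanPairing_mul_cartanPairing_lt_four ha0 hba
    rw [hk, hl] at this
    exact_mod_cast this
  obtain rfl | rfl : k = 1 ∨ l = 1 := by
    by_contra! h
    nlinarith [h.1.lt_of_le' hk0, h.2.lt_of_le' hl0]
  · simpa [rootReflection, hk] using hR.rootReflection_mem a ha b hb
  · simpa [rootReflection, hl] using hR.neg_mem (hR.rootReflection_mem b hb a ha)

/-- The `a`-string through `b` is unbroken: stepping down by `a` from `b` stays in `R` while the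
Cartan number with `a` is positive, i.e. up to the middle of the string, and the reflection in `a`
maps that half onto the other. -/
lemma sub_natCast_smul_mem (hR : IsReducedRootSet R) (ha : a ∈ R) (hb : b ∈ R)
    (hba : ∀ c : ℝ, b ≠ c • a) {n : ℕ} (hn : cartanPairing b a = n) {j : ℕ} (hj : j ≤ n) :
    b - (j : ℝ) • a ∈ R := by
  have ha0 := hR.ne_zero ha
  have hstring : ∀ t c : ℝ, b - t • a ≠ c • a := fun t c h =>
    hba (c + t) (by rw [add_smul, ← h, sub_add_cancel])
  have hcartan : ∀ t : ℝ, cartanPairing (b - t • a) a = n - 2 * t := fun t => by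
    rw [cartanPairing_sub_smul t ha0, hn]
  have hlower : ∀ i : ℕ, 2 * i ≤ n + 1 → b - (i : ℝ) • a ∈ R := by
    intro i
    induction i with
    | zero => simpa using hb
    | succ i ih =>
      intro hi
      have hpos : 0 < cartanPairing (b - (i : ℝ) • a) a := by
        have : (2 * i : ℝ) < n := by exact_mod_cast (by omega : 2 * i < n)
        rw [hcartan]
        linarith
      convert hR.sub_mem_of_cartanPairing_pos ha (ih (by omega)) (hstring i) hpos using 1
      push_cast
      module
  by_cases hj' : 2 * j ≤ n + 1
  · exact hlower j hj'
  · convert hR.rootReflection_mem a ha _ (hlower (n - j) (by omega)) using 1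
    rw [rootReflection, hcartan]
    push_cast [Nat.cast_sub hj]
    module

end IsReducedRootSet

def HasRootChain (R S : Set V) (x : V) : Prop :=
  ∃ m : ℕ, 1 ≤ m ∧ ∃ β : Fin m → V, ∃ ε : Fin m → ℝ,
    (∀ k, β k ∈ S) ∧ (∀ k, ε k = 1 ∨ ε k = -1) ∧
    x = ∑ k, ε k • β k ∧ ∀ k : Fin m, (∑ j ∈ Finset.Iic k, ε j • β j) ∈ R

namespace HasRootChain

variable {R S : Set V} {x a : V} {s : ℝ}

lemma mem (h : HasRootChain R S x) : x ∈ R := by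
  obtain ⟨m, hm, β, ε, -, -, rfl, hpartial⟩ := h
  obtain ⟨m, rfl⟩ := Nat.exists_eq_add_of_le' hm
  simpa [← Fin.top_eq_last] using hpartial (Fin.last m)

lemma single (ha : a ∈ S) (hs : s = 1 ∨ s = -1) (hmem : s • a ∈ R) :
    HasRootChain R S (s • a) :=
  ⟨1, le_rfl, fun _ => a, fun _ => s, fun _ => ha, fun _ => hs, by simp, fun k => by
    simpa [Fin.fin_one_eq_zero k] using hmem⟩

lemma add_smul (h : HasRootChain R S x) (ha : a ∈ S) (hs : s = 1 ∨ s = -1)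
    (hmem : x + s • a ∈ R) : HasRootChain R S (x + s • a) := by
  obtain ⟨m, hm, β, ε, hβ, hε, rfl, hpartial⟩ := h
  refine ⟨m + 1, by omega, Fin.snoc β a, Fin.snoc ε s, fun k => ?_, fun k => ?_, ?_, fun k => ?_⟩
  · induction k using Fin.lastCases <;> simp [ha, hβ]
  · induction k using Fin.lastCases <;> simp [hs, hε]
  · simp [Fin.sum_univ_castSucc]
  · induction k using Fin.lastCases with
    | last =>
      rw [← Fin.top_eq_last, Finset.Iic_top]
      simpa [Fin.sum_univ_castSucc] using hmem
    | cast j => simpa [Fin.sum_Iic_castSucc] using hpartial j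

lemma add_natCast_smul (h : HasRootChain R S x) (ha : a ∈ S) (hs : s = 1 ∨ s = -1) {n : ℕ}
    (hmem : ∀ j ≤ n, x + (j : ℝ) • s • a ∈ R) : HasRootChain R S (x + (n : ℝ) • s • a) := by
  induction n with
  | zero => simpa using h
  | succ n ih =>
    have hnext := (ih fun j hj => hmem j (by omega)).add_smul ha hs
      (by convert hmem (n + 1) le_rfl using 1; push_cast; module)
    convert hnext using 1
    push_cast
    module

lemma rootReflection (hR : IsReducedRootSet R) (h : HasRootChain R S x) (ha : a ∈ R)
    (haS : a ∈ S) : HasRootChain R S (rootReflection a x) := by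
  have ha0 := hR.ne_zero ha
  by_cases hxa : ∃ c : ℝ, x = c • a
  · obtain ⟨c, rfl⟩ := hxa
    have hc : -c = 1 ∨ -c = -1 := by
      rcases hR.reduced a ha c h.mem with rfl | rfl <;> norm_num
    rw [rootReflection_smul c ha0]
    exact single haS hc (hR.smul_mem_of_eq_one_or_eq_neg_one ha hc)
  push Not at hxa
  obtain ⟨k, hk⟩ := hR.cartanPairing_int a ha x h.mem
  obtain ⟨n, s, hs, hn, hreflect⟩ : ∃ (n : ℕ) (s : ℝ), (s = 1 ∨ s = -1) ∧
      cartanPairing x (s • a) = n ∧ _root_.rootReflection a x = x + (n : ℝ) • (-s) • a := by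
    rcases Int.eq_nat_or_neg k with ⟨n, rfl | rfl⟩
    · exact ⟨n, 1, Or.inl rfl, by simpa using hk, by rw [_root_.rootReflection, hk]; module⟩
    · refine ⟨n, -1, Or.inr rfl, ?_, by rw [_root_.rootReflection, hk]; push_cast; module⟩
      rw [neg_one_smul, cartanPairing_neg_right, hk]
      push_cast
      ring
  have hsa : s • a ∈ R := hR.smul_mem_of_eq_one_or_eq_neg_one ha hs
  have hxsa : ∀ c : ℝ, x ≠ c • s • a := fun c => by rw [smul_smul]; exact hxa _
  rw [hreflect]
  refine h.add_natCast_smul haS (by rcases hs with rfl | rfl <;> norm_num) fun j hj => ?_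
  convert hR.sub_natCast_smul_mem hsa h.mem hxsa hn hj using 1
  module

lemma foldr_rootReflection (hR : IsReducedRootSet R) (h : HasRootChain R S x) (L : List V)
    (hL : ∀ a ∈ L, a ∈ R ∧ a ∈ S) : HasRootChain R S (L.foldr _root_.rootReflection x) := by
  induction L with
  | nil => exact h
  | cons a L ih =>
    simp only [List.mem_cons, forall_eq_or_imp] at hL
    exact (ih hL.2).rootReflection hR hL.1.1 hL.1.2

end HasRootChain

end

theorem stmt9_general (V : Type*) [NormedAddCommGroup V] [InnerProductSpace ℝ V]
    (R : Set V) (h0 : (0 : V) ∉ R)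
    (w : V → V → V) (hw : ∀ a x, w a x = x - (2 * ⟪x, a⟫ / ⟪a, a⟫) • a)
    (hrefl : ∀ α ∈ R, ∀ β ∈ R, w α β ∈ R)
    (hcrys : ∀ α ∈ R, ∀ β ∈ R, ∃ k : ℤ, 2 * ⟪β, α⟫ / ⟪α, α⟫ = (k : ℝ))
    (hred : ∀ α ∈ R, ∀ c : ℝ, c • α ∈ R → c = 1 ∨ c = -1)
    (n : ℕ) (α : Fin (n + 1) → V) (hα : ∀ i, α i ∈ R) :
    ∃ m : ℕ, 1 ≤ m ∧ ∃ β : Fin m → V, ∃ ε : Fin m → ℝ,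
      (∀ k, β k ∈ Set.range α) ∧
      (∀ k, ε k = 1 ∨ ε k = -1) ∧
      ((List.ofFn fun i : Fin n => α i.castSucc).foldr w (α (Fin.last n)) =
        ∑ k, ε k • β k) ∧
      (∀ k : Fin m, (∑ j ∈ Finset.Iic k, ε j • β j) ∈ R) := by
  obtain rfl : w = rootReflection := funext₂ hw
  have hR : IsReducedRootSet R := ⟨h0, hrefl, hcrys, hred⟩
  have hlast : HasRootChain R (Set.range α) (α (Fin.last n)) := by
    simpa using HasRootChain.single (R := R) (s := 1) (Set.mem_range_self (Fin.last n))
      (Or.inl rfl) (by simpa using hα (Fin.last n))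
  exact hlast.foldr_rootReflection hR _ (by simp [List.mem_ofFn, hα])

/-- Let `R` be a finite reduced crystallographic root system in a real inner product
space with reflections `w α x = x - ⟨x, α^∨⟩ • α`.  For roots `α 0, …, α n`, the element
`w_{α 0} ∘ ⋯ ∘ w_{α (n-1)} (α n)` is a signed sum `ε₁ β₁ + ⋯ + ε_m β_m` of the given roots,
all of whose partial sums lie in `R`. -/
theorem stmt9 (V : Type*) [NormedAddCommGroup V] [InnerProductSpace ℝ V]
    [FiniteDimensional ℝ V]
    (R : Set V) (hfin : R.Finite) (hspan : Submodule.span ℝ R = ⊤) (h0 : (0 : V) ∉ R)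
    (w : V → V → V) (hw : ∀ a x, w a x = x - (2 * ⟪x, a⟫ / ⟪a, a⟫) • a)
    (hrefl : ∀ α ∈ R, ∀ β ∈ R, w α β ∈ R)
    (hcrys : ∀ α ∈ R, ∀ β ∈ R, ∃ k : ℤ, 2 * ⟪β, α⟫ / ⟪α, α⟫ = (k : ℝ))
    (hred : ∀ α ∈ R, ∀ c : ℝ, c • α ∈ R → c = 1 ∨ c = -1)
    (n : ℕ) (hn : 1 ≤ n) (α : Fin (n + 1) → V) (hα : ∀ i, α i ∈ R) :
    ∃ m : ℕ, 1 ≤ m ∧ ∃ β : Fin m → V, ∃ ε : Fin m → ℝ,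
      (∀ k, β k ∈ Set.range α) ∧
      (∀ k, ε k = 1 ∨ ε k = -1) ∧
      ((List.ofFn fun i : Fin n => α i.castSucc).foldr w (α (Fin.last n)) =
        ∑ k, ε k • β k) ∧
      (∀ k : Fin m, (∑ j ∈ Finset.Iic k, ε j • β j) ∈ R) :=
  stmt9_general V R h0 w hw hrefl hcrys hred n α hα
end

section
/- Let Λ be a free abelian group of finite rank, let τ₀ = 0 and τ₁, …, τ_m ∈ Λ be pairwise incongruent modulo 2Λ, and set S := ⋃_{i=0}^{m} (τ_i + 2Λ). Assume condition (⋆): for every k with 3 ≤ k ≤ 6 and all distinct indices 1 ≤ i₁ < ⋯ < i_k ≤ m, one has τ_{i₁} + ⋯ + τ_{i_k} ∉ 2Λ. Then: (a) τ_{i₁} + τ_{i₂} ∉ S for all distinct i₁, i₂ ∈ {1, …, m}; (b) τ_{i₁} + τ_{i₂} + τ_{i₃} ∉ S + S for all distinct i₁, i₂, i₃ ∈ {1, …, m}; (c) τ_{i₁} + τ_{i₂} + τ_{i₃} + τ_{i₄} ∉ S + S for all distinct i₁, i₂, i₃, i₄ ∈ {1, …, m}. -/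
/-!
Work modulo `2Λ` through the predicate `Even`. An element of `S` (resp. `S + S`) is congruent to
`∑ i ∈ B, τ i` for a set `B` of at most one (resp. two) indices, as `τ a + τ a` is even. If
`∑ i ∈ A, τ i ≡ ∑ i ∈ B, τ i` with `#B < #A` and `#A + #B ≤ 6`, then, since both sides differ from
the sum over `A ∆ B` by twice the sum over `A ∩ B`, the sum over the nonempty set `A ∆ B` minus the
index `0` would be even: impossible for one or two indices by incongruence, for three to six by (⋆).
-/

open Finset
open scoped Pointwise

theorem even_iff_exists_eq_two_zsmul {G : Type*} [AddCommGroup G] (x : G) :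
    Even x ↔ ∃ y : G, x = (2 : ℤ) • y := by
  simp only [Even, two_zsmul]

namespace Finset

variable {ι G : Type*} [DecidableEq ι] [AddCommGroup G]

theorem even_sum_add_sum_sub_sum_symmDiff (A B : Finset ι) (f : ι → G) :
    Even (∑ i ∈ A, f i + ∑ i ∈ B, f i - ∑ i ∈ symmDiff A B, f i) := by
  have hunion : ∑ i ∈ A ∪ B, f i = ∑ i ∈ symmDiff A B, f i + ∑ i ∈ A ∩ B, f i := by
    have hsplit : A ∪ B = symmDiff A B ∪ A ∩ B := (symmDiff_sup_inf A B).symm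
    rw [hsplit]
    exact sum_union (disjoint_symmDiff_inf A B)
  rw [← sum_union_inter, hunion, add_sub_right_comm, add_sub_cancel_left]
  exact Even.add_self _

end Finset

section

variable {ι Λ : Type*} [AddCommGroup Λ] {τ : ι → Λ} {i₀ : ι}

variable (τ i₀) in
def NoEvenSubsum : Prop :=
  ∀ J : Finset ι, i₀ ∉ J → J.Nonempty → #J ≤ 6 → ¬Even (∑ i ∈ J, τ i)

variable [DecidableEq ι]

theorem noEvenSubsum_of_incongruent (hτ₀ : τ i₀ = 0)
    (hincong : ∀ i j, i ≠ j → ¬Even (τ i - τ j))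
    (hstar : ∀ I : Finset ι, 3 ≤ #I → #I ≤ 6 → i₀ ∉ I → ¬Even (∑ i ∈ I, τ i)) :
    NoEvenSubsum τ i₀ := by
  intro J hJ₀ hJ hJ6
  obtain hJ3 | hJ3 := Nat.lt_or_ge #J 3
  · obtain hJ1 | hJ2 : #J = 1 ∨ #J = 2 := by have := hJ.card_pos; omega
    · obtain ⟨x, rfl⟩ := card_eq_one.mp hJ1
      have hx : x ≠ i₀ := fun h => hJ₀ (mem_singleton.mpr h.symm)
      simpa [hτ₀] using hincong x i₀ hx
    · obtain ⟨x, z, hxz, rfl⟩ := card_eq_two.mp hJ2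
      intro heven
      refine hincong x z hxz ?_
      have hdiff : τ x - τ z = τ x + τ z - (τ z + τ z) := by abel
      rw [hdiff, ← sum_pair hxz]
      exact heven.sub (Even.add_self _)
  · exact hstar J hJ3 hJ6 hJ₀

theorem NoEvenSubsum.not_even_sum_sub_sum (hodd : NoEvenSubsum τ i₀) (hτ₀ : τ i₀ = 0)
    {A B : Finset ι} (hA₀ : i₀ ∉ A) (hBA : #B < #A) (hAB : #A + #B ≤ 6) :
    ¬Even (∑ i ∈ A, τ i - ∑ i ∈ B, τ i) := by
  intro heven
  obtain ⟨x, hxA, hxB⟩ := not_subset.mp fun h => (card_le_card h).not_gt hBA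
  have hx : x ∈ (symmDiff A B).erase i₀ :=
    mem_erase.mpr ⟨fun h => hA₀ (h ▸ hxA), mem_symmDiff.mpr (Or.inl ⟨hxA, hxB⟩)⟩
  have hcard : #((symmDiff A B).erase i₀) ≤ 6 :=
    calc #((symmDiff A B).erase i₀) ≤ #(A ∪ B) :=
          (card_erase_le).trans (card_le_card symmDiff_subset_union)
      _ ≤ 6 := (card_union_le A B).trans hAB
  refine hodd _ (notMem_erase _ _) ⟨x, hx⟩ hcard ?_
  have hdecomp : ∑ i ∈ symmDiff A B, τ i = (∑ i ∈ A, τ i - ∑ i ∈ B, τ i) + (∑ i ∈ B, τ i + ∑ i ∈ B, τ i)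
      - (∑ i ∈ A, τ i + ∑ i ∈ B, τ i - ∑ i ∈ symmDiff A B, τ i) := by abel
  rw [sum_erase _ hτ₀, hdecomp]
  exact (heven.add (Even.add_self _)).sub (even_sum_add_sum_sub_sum_symmDiff A B τ)

variable {S : Set Λ}

theorem exists_even_sub_sum_of_mem_add (hS : ∀ x, x ∈ S ↔ ∃ i, Even (x - τ i)) {x : Λ}
    (hx : x ∈ S + S) : ∃ B : Finset ι, #B ≤ 2 ∧ Even (x - ∑ i ∈ B, τ i) := by
  obtain ⟨u, hu, v, hv, rfl⟩ := Set.mem_add.mp hx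
  obtain ⟨a, ha⟩ := (hS u).mp hu
  obtain ⟨b, hb⟩ := (hS v).mp hv
  have hab : Even (u + v - (τ a + τ b)) := by
    rw [add_sub_add_comm]; exact ha.add hb
  by_cases h : a = b
  · subst h
    exact ⟨∅, by simp, by simpa using hab.add (Even.add_self (τ a))⟩
  · exact ⟨{a, b}, (card_pair h).le, by rwa [sum_pair h]⟩

theorem NoEvenSubsum.sum_notMem_of_card_eq_two (hodd : NoEvenSubsum τ i₀) (hτ₀ : τ i₀ = 0)
    (hS : ∀ x, x ∈ S ↔ ∃ i, Even (x - τ i))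
    {A : Finset ι} (hA₀ : i₀ ∉ A) (hA : #A = 2) : ∑ i ∈ A, τ i ∉ S := by
  intro hmem
  obtain ⟨a, ha⟩ := (hS _).mp hmem
  exact hodd.not_even_sum_sub_sum hτ₀ hA₀ (B := {a}) (by simp [hA]) (by simp [hA])
    (by rwa [sum_singleton])

theorem NoEvenSubsum.sum_notMem_add_of_card (hodd : NoEvenSubsum τ i₀) (hτ₀ : τ i₀ = 0)
    (hS : ∀ x, x ∈ S ↔ ∃ i, Even (x - τ i))
    {A : Finset ι} (hA₀ : i₀ ∉ A) (hA : #A = 3 ∨ #A = 4) : ∑ i ∈ A, τ i ∉ S + S := by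
  intro hmem
  obtain ⟨B, hB, heven⟩ := exists_even_sub_sum_of_mem_add hS hmem
  exact hodd.not_even_sum_sub_sum hτ₀ hA₀ (by omega) (by omega) heven

end

theorem stmt11_general (Λ : Type*) [AddCommGroup Λ]
    (m : ℕ) (τ : Fin (m + 1) → Λ) (hτ0 : τ 0 = 0)
    (hincong : ∀ i j : Fin (m + 1), i ≠ j → ¬∃ y : Λ, τ i - τ j = (2 : ℤ) • y)
    (S : Set Λ) (hS : S = {x | ∃ i : Fin (m + 1), ∃ y : Λ, x = τ i + (2 : ℤ) • y})
    (hstar : ∀ I : Finset (Fin (m + 1)), 3 ≤ I.card → I.card ≤ 6 →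
      (0 : Fin (m + 1)) ∉ I → ¬∃ y : Λ, (∑ i ∈ I, τ i) = (2 : ℤ) • y) :
    (∀ i j : Fin (m + 1), i ≠ 0 → j ≠ 0 → i ≠ j → τ i + τ j ∉ S) ∧
    (∀ i j k : Fin (m + 1), i ≠ 0 → j ≠ 0 → k ≠ 0 → i ≠ j → i ≠ k → j ≠ k →
      τ i + τ j + τ k ∉ S + S) ∧
    (∀ i j k l : Fin (m + 1), i ≠ 0 → j ≠ 0 → k ≠ 0 → l ≠ 0 →
      i ≠ j → i ≠ k → i ≠ l → j ≠ k → j ≠ l → k ≠ l →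
      τ i + τ j + τ k + τ l ∉ S + S) := by
  simp only [← even_iff_exists_eq_two_zsmul] at hincong hstar
  have hS' : ∀ x, x ∈ S ↔ ∃ i, Even (x - τ i) := by
    simp [hS, even_iff_exists_eq_two_zsmul, sub_eq_iff_eq_add']
  have hodd : NoEvenSubsum τ 0 := noEvenSubsum_of_incongruent hτ0 hincong hstar
  refine ⟨fun i j hi hj hij => ?_, fun i j k hi hj hk hij hik hjk => ?_,
    fun i j k l hi hj hk hl hij hik hil hjk hjl hkl => ?_⟩
  · simpa [sum_pair hij] using hodd.sum_notMem_of_card_eq_two hτ0 hS' (A := {i, j})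
      (by simp [hi.symm, hj.symm]) (card_pair hij)
  · simpa [hij, hik, hjk, add_assoc] using hodd.sum_notMem_add_of_card hτ0 hS' (A := {i, j, k})
      (by simp [hi.symm, hj.symm, hk.symm])
      (.inl (card_eq_three.mpr ⟨i, j, k, hij, hik, hjk, rfl⟩))
  · simpa [hij, hik, hil, hjk, hjl, hkl, add_assoc] using
      hodd.sum_notMem_add_of_card hτ0 hS' (A := {i, j, k, l})
        (by simp [hi.symm, hj.symm, hk.symm, hl.symm])
        (.inr (card_eq_four.mpr ⟨i, j, k, l, hij, hik, hil, hjk, hjl, hkl, rfl⟩))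

/-- Let `Λ` be a free abelian group of finite rank, `τ 0 = 0`, and
`τ 1, …, τ m` pairwise incongruent mod `2Λ`, `S = ⋃ᵢ (τ i + 2Λ)`.  Under condition (⋆)
(no sum of `k` distinct nonzero `τ`'s (`3 ≤ k ≤ 6`) lies in `2Λ`):
(a) `τ i + τ j ∉ S` for distinct nonzero `i, j`;
(b) triple sums of distinct nonzero `τ`'s are not in `S + S`;
(c) quadruple sums of distinct nonzero `τ`'s are not in `S + S`. -/
theorem stmt11 (Λ : Type*) [AddCommGroup Λ] [Module.Free ℤ Λ] [Module.Finite ℤ Λ]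
    (m : ℕ) (τ : Fin (m + 1) → Λ) (hτ0 : τ 0 = 0)
    (hincong : ∀ i j : Fin (m + 1), i ≠ j → ¬∃ y : Λ, τ i - τ j = (2 : ℤ) • y)
    (S : Set Λ) (hS : S = {x | ∃ i : Fin (m + 1), ∃ y : Λ, x = τ i + (2 : ℤ) • y})
    (hstar : ∀ I : Finset (Fin (m + 1)), 3 ≤ I.card → I.card ≤ 6 →
      (0 : Fin (m + 1)) ∉ I → ¬∃ y : Λ, (∑ i ∈ I, τ i) = (2 : ℤ) • y) :
    (∀ i j : Fin (m + 1), i ≠ 0 → j ≠ 0 → i ≠ j → τ i + τ j ∉ S) ∧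
    (∀ i j k : Fin (m + 1), i ≠ 0 → j ≠ 0 → k ≠ 0 → i ≠ j → i ≠ k → j ≠ k →
      τ i + τ j + τ k ∉ S + S) ∧
    (∀ i j k l : Fin (m + 1), i ≠ 0 → j ≠ 0 → k ≠ 0 → l ≠ 0 →
      i ≠ j → i ≠ k → i ≠ l → j ≠ k → j ≠ l → k ≠ l →
      τ i + τ j + τ k + τ l ∉ S + S) :=
  stmt11_general Λ m τ hτ0 hincong S hS hstar
end

section
/- Let Λ be a free abelian group of finite rank ν ≥ 1, let τ₀ = 0 and τ₁, …, τ_m ∈ Λ be pairwise incongruent modulo 2Λ, and set S := ⋃_{i=0}^{m} (τ_i + 2Λ). In the group ℤ ⊕ Λ (with α̇ := (1,0)), set R := ({0} ⊕ (S + S)) ∪ {ε·α̇ + σ : ε ∈ {1,−1}, σ ∈ S}, with isotropic roots R⁰ = {0} ⊕ (S + S). Assume condition (⋆): for every k with 3 ≤ k ≤ 6 and all distinct indices 1 ≤ i₁ < ⋯ < i_k ≤ m, one has τ_{i₁} + ⋯ + τ_{i_k} ∉ 2Λ. Define Φ : R → {1, −1} by: Φ(±α̇ + σ) = 1 if σ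 ∈ 2Λ, and Φ(±α̇ + σ) = −1 if σ ∈ τ_i + 2Λ for some 1 ≤ i ≤ m; and for σ ∈ S + S, Φ(σ) = 1 if σ ∈ 2Λ or σ ∈ (S + S) ∖ S, and Φ(σ) = −1 if σ ∈ S ∖ 2Λ. Then Φ is well defined and is a character for R: Φ(α + β) = Φ(α)Φ(β) for all α, β ∈ R with α + β ∈ R. -/
open scoped Pointwise

/-!
The prescribed `Φ` depends only on the class of the `Λ`-component in `V = Λ / 2Λ`, where it is
the sign `χ` equal to `-1` exactly on the set `T` of nonzero classes of `S`; thus `S` maps onto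
`T ∪ {0}`. Incongruence of the `τᵢ` and (⋆) say that no one to six distinct elements of `T` sum
to zero. Every element of `V` has order two, so equal elements of a multiset cancel in pairs:
a zero-sum multiset of at most six elements of `T ∪ {0}` has an even number of members in `T`,
i.e. `χ` has product one over it. Applied to `{a, b, a + b}` this gives `χ (a + b) = χ a * χ b`
on `T ∪ {0}`, and applied to `{a, b, c, d, p, q}` with `(a + b) + (c + d) = p + q` it gives the
multiplicativity of `χ` on `(T ∪ {0}) + (T ∪ {0})`, which contains the images of all roots.
-/

section SetSign

variable {V : Type*}

open Classical in
noncomputable def setSign (T : Set V) (w : V) : ℂˣ := if w ∈ T then -1 else 1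

theorem setSign_of_mem {T : Set V} {w : V} (h : w ∈ T) : setSign T w = -1 := by
  simp [setSign, h]

theorem setSign_of_notMem {T : Set V} {w : V} (h : w ∉ T) : setSign T w = 1 := by
  simp [setSign, h]

theorem setSign_inv (T : Set V) (w : V) : (setSign T w)⁻¹ = setSign T w := by
  by_cases h : w ∈ T <;> simp [setSign, h]

open Classical in
theorem prod_map_setSign (T : Set V) (M : Multiset V) :
    (M.map (setSign T)).prod = (-1) ^ Multiset.card (M.filter (· ∈ T)) := by
  induction M using Multiset.induction_on with
  | empty => simp
  | cons a M ih => by_cases h : a ∈ T <;> simp [h, ih, setSign, pow_succ, mul_comm]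

end SetSign

section ZeroSumFree

variable {V : Type*} [AddCommGroup V]

def NoZeroSumUpTo (n : ℕ) (T : Set V) : Prop :=
  ∀ s : Finset V, ↑s ⊆ T → s.Nonempty → s.card ≤ n → ∑ x ∈ s, x ≠ 0

theorem NoZeroSumUpTo.mono {n n' : ℕ} {T : Set V} (hT : NoZeroSumUpTo n T) (h : n' ≤ n) :
    NoZeroSumUpTo n' T :=
  fun s hsT hs hcard => hT s hsT hs (hcard.trans h)

theorem NoZeroSumUpTo.zero_notMem {n : ℕ} {T : Set V} (hT : NoZeroSumUpTo n T) (hn : 1 ≤ n) :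
    (0 : V) ∉ T := fun h0 => hT {0} (by simpa) (by simp) (by simpa) (by simp)

theorem NoZeroSumUpTo.even_card {n : ℕ} {T : Set V} (hV : ∀ w : V, w + w = 0)
    (hT : NoZeroSumUpTo n T) {M : Multiset V} (hMT : ∀ x ∈ M, x ∈ T)
    (hcard : Multiset.card M ≤ n) (hsum : M.sum = 0) : Even (Multiset.card M) := by
  induction M using Multiset.strongInductionOn with
  | _ M ih =>
  by_cases hnd : M.Nodup
  · obtain rfl : M = 0 := by
      by_contra hM
      exact hT ⟨M, hnd⟩ hMT (Finset.nonempty_iff_ne_empty.2 (by simpa [← Finset.val_eq_zero]))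
        hcard (by simpa [Finset.sum] using hsum)
    simp
  · obtain ⟨a, M', rfl⟩ : ∃ a M', M = a ::ₘ a ::ₘ M' := by
      simpa [Multiset.nodup_iff_ne_cons_cons] using hnd
    have hlt : M' < a ::ₘ a ::ₘ M' :=
      (Multiset.lt_cons_self M' a).trans (Multiset.lt_cons_self _ a)
    have hM' := ih M' hlt (fun x hx => hMT x (by simp [hx])) (by simp at hcard; omega)
      (by simpa [← add_assoc, hV] using hsum)
    simpa [Nat.even_add_one] using hM'

theorem NoZeroSumUpTo.prod_map_setSign_eq_one {n : ℕ} {T : Set V} (hV : ∀ w : V, w + w = 0)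
    (hT : NoZeroSumUpTo n T) {M : Multiset V} (hMT : ∀ x ∈ M, x ∈ insert 0 T)
    (hcard : Multiset.card M ≤ n) (hsum : M.sum = 0) : (M.map (setSign T)).prod = 1 := by
  classical
  have hzero : (M.filter (· ∉ T)).sum = 0 := Multiset.sum_eq_zero fun x hx => by
    obtain ⟨hxM, hxT⟩ := Multiset.mem_filter.1 hx
    simpa [hxT] using hMT x hxM
  have heven := hT.even_card hV (M := M.filter (· ∈ T)) (fun x hx => (Multiset.mem_filter.1 hx).2)
    ((Multiset.card_le_card (Multiset.filter_le _ M)).trans hcard)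
    (by rw [← hsum, ← Multiset.sum_filter_add_sum_filter_not (s := M) (· ∈ T), hzero, add_zero])
  rw [prod_map_setSign, heven.neg_one_pow]

theorem NoZeroSumUpTo.setSign_add {T : Set V} (hV : ∀ w : V, w + w = 0)
    (hT : NoZeroSumUpTo 3 T) {a b : V} (ha : a ∈ insert 0 T) (hb : b ∈ insert 0 T) :
    setSign T (a + b) = setSign T a * setSign T b := by
  by_cases hab : a + b ∈ insert 0 T
  · have h3 := hT.prod_map_setSign_eq_one hV (M := {a, b, a + b})
      (by simp only [Multiset.insert_eq_cons, Multiset.mem_cons, Multiset.mem_singleton]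
          rintro x (rfl | rfl | rfl) <;> assumption)
      (by simp)
      (by rw [Multiset.insert_eq_cons, Multiset.insert_eq_cons, Multiset.sum_cons,
        Multiset.sum_cons, Multiset.sum_singleton, ← add_assoc, hV])
    simp only [Multiset.insert_eq_cons, Multiset.map_cons, Multiset.prod_cons,
      Multiset.map_singleton, Multiset.prod_singleton, ← mul_assoc] at h3
    rw [eq_inv_of_mul_eq_one_right h3, mul_inv, setSign_inv, setSign_inv]
  · have ha' : a ∈ T := by
      rcases ha with rfl | ha
      · simp [hb] at hab
      · exact ha
    have hb' : b ∈ T := by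
      rcases hb with rfl | hb
      · simp [ha] at hab
      · exact hb
    rw [setSign_of_notMem fun h => hab (Or.inr h), setSign_of_mem ha', setSign_of_mem hb',
      neg_one_mul, neg_neg]

theorem NoZeroSumUpTo.setSign_add_of_mem_add {T : Set V} (hV : ∀ w : V, w + w = 0)
    (hT : NoZeroSumUpTo 6 T) {x y : V} (hx : x ∈ insert 0 T + insert 0 T)
    (hy : y ∈ insert 0 T + insert 0 T) (hxy : x + y ∈ insert 0 T + insert 0 T) :
    setSign T (x + y) = setSign T x * setSign T y := by
  obtain ⟨a, ha, b, hb, rfl⟩ := hx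
  obtain ⟨c, hc, d, hd, rfl⟩ := hy
  obtain ⟨p, hp, q, hq, hpq : p + q = a + b + (c + d)⟩ := hxy
  have hT3 := hT.mono (by norm_num : 3 ≤ 6)
  have h6 := hT.prod_map_setSign_eq_one hV (M := {a, b, c, d, p, q})
    (by simp only [Multiset.insert_eq_cons, Multiset.mem_cons, Multiset.mem_singleton]
        rintro x (rfl | rfl | rfl | rfl | rfl | rfl) <;> assumption)
    (by simp)
    (by simp only [Multiset.insert_eq_cons, Multiset.sum_cons, Multiset.sum_singleton]
        calc a + (b + (c + (d + (p + q)))) = (a + b + (c + d)) + (p + q) := by abel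
          _ = 0 := by rw [hpq, hV])
  have h6' : setSign T a * setSign T b * (setSign T c * setSign T d) * (setSign T p * setSign T q)
      = 1 := by
    simpa only [Multiset.insert_eq_cons, Multiset.map_cons, Multiset.prod_cons,
      Multiset.map_singleton, Multiset.prod_singleton, mul_assoc] using h6
  rw [← hpq, hT3.setSign_add hV hp hq, hT3.setSign_add hV ha hb, hT3.setSign_add hV hc hd,
    eq_inv_of_mul_eq_one_right h6']
  simp only [mul_inv, setSign_inv]

end ZeroSumFree

section DoubleSubgroup

variable {Λ : Type*} [AddCommGroup Λ]

variable (Λ) in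
def doubles : AddSubgroup Λ := (zsmulAddGroupHom 2 : Λ →+ Λ).range

theorem mk_doubles_eq_zero_iff {x : Λ} :
    (x : Λ ⧸ doubles Λ) = 0 ↔ ∃ y : Λ, x = (2 : ℤ) • y := by
  rw [QuotientAddGroup.eq_zero_iff, doubles, AddMonoidHom.mem_range]
  simp only [zsmulAddGroupHom_apply, eq_comm]

theorem mk_doubles_eq_mk_iff {x z : Λ} :
    (x : Λ ⧸ doubles Λ) = z ↔ ∃ y : Λ, x = z + (2 : ℤ) • y := by
  rw [← sub_eq_zero, ← QuotientAddGroup.mk_sub, mk_doubles_eq_zero_iff]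
  simp only [sub_eq_iff_eq_add']

theorem doubles_add_self (w : Λ ⧸ doubles Λ) : w + w = 0 := by
  induction w using QuotientAddGroup.induction_on with
  | H x => exact mk_doubles_eq_zero_iff.2 ⟨x, (two_zsmul x).symm⟩

variable {ι : Type*}

def nonzeroClasses (τ : ι → Λ) (i₀ : ι) : Set (Λ ⧸ doubles Λ) :=
  (fun i => (τ i : Λ ⧸ doubles Λ)) '' {i | i ≠ i₀}

theorem mk_mem_insert_zero_nonzeroClasses_iff {τ : ι → Λ} {i₀ : ι} (hτ₀ : τ i₀ = 0) {x : Λ} :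
    (x : Λ ⧸ doubles Λ) ∈ insert 0 (nonzeroClasses τ i₀) ↔
      ∃ i, ∃ y : Λ, x = τ i + (2 : ℤ) • y := by
  simp only [nonzeroClasses, Set.mem_insert_iff, Set.mem_image, Set.mem_ofPred_eq,
    ← mk_doubles_eq_mk_iff]
  constructor
  · rintro (hx | ⟨i, -, hi⟩)
    · exact ⟨i₀, by rw [hx, hτ₀, QuotientAddGroup.mk_zero]⟩
    · exact ⟨i, hi.symm⟩
  · rintro ⟨i, hi⟩
    by_cases h : i = i₀
    · subst h; left; rw [hi, hτ₀, QuotientAddGroup.mk_zero]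
    · exact Or.inr ⟨i, h, hi.symm⟩

theorem noZeroSumUpTo_nonzeroClasses {τ : ι → Λ} {i₀ : ι} {n : ℕ} (hτ₀ : τ i₀ = 0)
    (hincong : ∀ i j, i ≠ j → ¬∃ y : Λ, τ i - τ j = (2 : ℤ) • y)
    (hsum : ∀ I : Finset ι, 3 ≤ I.card → I.card ≤ n → i₀ ∉ I →
      ¬∃ y : Λ, ∑ i ∈ I, τ i = (2 : ℤ) • y) :
    NoZeroSumUpTo n (nonzeroClasses τ i₀) := by
  classical
  have hinj : Function.Injective (fun i => (τ i : Λ ⧸ doubles Λ)) := fun i j hij => by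
    by_contra hne
    obtain ⟨y, hy⟩ := mk_doubles_eq_mk_iff.1 hij
    exact hincong i j hne ⟨y, by rw [hy]; abel⟩
  intro s hsT hs hcard hzero
  obtain ⟨I, hI, rfl⟩ := Finset.subset_set_image_iff.1 hsT
  rw [Finset.card_image_of_injective I hinj] at hcard
  rw [Finset.sum_image fun i _ j _ hij => hinj hij, ← QuotientAddGroup.mk_sum] at hzero
  obtain ⟨y, hy⟩ := mk_doubles_eq_zero_iff.1 hzero
  have hi₀ : i₀ ∉ I := fun h => hI h rfl
  obtain hI₁ | hI₂ | hI₃ : I.card = 1 ∨ I.card = 2 ∨ 3 ≤ I.card := by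
    have := (Finset.card_pos.2 (Finset.image_nonempty.1 hs)); omega
  · obtain ⟨i, rfl⟩ := Finset.card_eq_one.1 hI₁
    exact hincong i i₀ (fun h => hi₀ (by simp [h])) ⟨y, by simpa [hτ₀] using hy⟩
  · obtain ⟨i, j, hij, rfl⟩ := Finset.card_eq_two.1 hI₂
    rw [Finset.sum_pair hij] at hy
    exact hincong i j hij ⟨y - τ j, by rw [smul_sub, ← hy, two_zsmul]; abel⟩
  · exact hsum I hI₃ hcard hi₀ ⟨y, hy⟩

end DoubleSubgroup

theorem stmt12_general (Λ : Type*) [AddCommGroup Λ]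
    (m : ℕ) (τ : Fin (m + 1) → Λ) (hτ0 : τ 0 = 0)
    (hincong : ∀ i j : Fin (m + 1), i ≠ j → ¬∃ y : Λ, τ i - τ j = (2 : ℤ) • y)
    (S : Set Λ) (hS : S = {x | ∃ i : Fin (m + 1), ∃ y : Λ, x = τ i + (2 : ℤ) • y})
    (hstar : ∀ I : Finset (Fin (m + 1)), 3 ≤ I.card → I.card ≤ 6 →
      (0 : Fin (m + 1)) ∉ I → ¬∃ y : Λ, (∑ i ∈ I, τ i) = (2 : ℤ) • y)
    (R : Set (ℤ × Λ))
    (hR : R = {p | (p.1 = 0 ∧ p.2 ∈ S + S) ∨ ((p.1 = 1 ∨ p.1 = -1) ∧ p.2 ∈ S)}) :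
    ∃ Φ : ℤ × Λ → ℂˣ,
      (∀ ε : ℤ, ∀ σ : Λ, (ε = 1 ∨ ε = -1) → (∃ y : Λ, σ = (2 : ℤ) • y) →
        Φ (ε, σ) = 1) ∧
      (∀ ε : ℤ, ∀ σ : Λ, (ε = 1 ∨ ε = -1) →
        (∃ i : Fin (m + 1), i ≠ 0 ∧ ∃ y : Λ, σ = τ i + (2 : ℤ) • y) →
        Φ (ε, σ) = -1) ∧
      (∀ σ ∈ S + S, ((∃ y : Λ, σ = (2 : ℤ) • y) ∨ σ ∉ S) → Φ (0, σ) = 1) ∧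
      (∀ σ ∈ S, ¬(∃ y : Λ, σ = (2 : ℤ) • y) → Φ (0, σ) = -1) ∧
      (∀ α ∈ R, ∀ β ∈ R, α + β ∈ R → Φ (α + β) = Φ α * Φ β) := by
  set T := nonzeroClasses τ 0
  have hT : NoZeroSumUpTo 6 T := noZeroSumUpTo_nonzeroClasses hτ0 hincong hstar
  have h0T : (0 : Λ ⧸ doubles Λ) ∉ T := hT.zero_notMem (by norm_num)
  have hST (x : Λ) : x ∈ S ↔ (x : Λ ⧸ doubles Λ) ∈ insert 0 T := by
    rw [mk_mem_insert_zero_nonzeroClasses_iff hτ0, hS, Set.mem_ofPred_eq]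
  have hR₂ : ∀ α ∈ R, (α.2 : Λ ⧸ doubles Λ) ∈ insert 0 T + insert 0 T := by
    have hSS : S ⊆ S + S := Set.subset_add_left S ((hST 0).2 (Or.inl rfl))
    rintro α hα
    obtain ⟨a, ha, b, hb, hab⟩ : α.2 ∈ S + S := by
      rw [hR] at hα
      rcases hα with ⟨-, h⟩ | ⟨-, h⟩
      exacts [h, hSS h]
    exact ⟨a, (hST a).1 ha, b, (hST b).1 hb, by rw [← hab, QuotientAddGroup.mk_add]⟩
  refine ⟨fun α => setSign T (α.2 : Λ ⧸ doubles Λ), ?_, ?_, ?_, ?_, ?_⟩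
  · rintro ε σ - hσ
    exact setSign_of_notMem (by rw [mk_doubles_eq_zero_iff.2 hσ]; exact h0T)
  · rintro ε σ - ⟨i, hi, hσ⟩
    exact setSign_of_mem ⟨i, hi, (mk_doubles_eq_mk_iff.2 hσ).symm⟩
  · rintro σ - (hσ | hσ)
    · exact setSign_of_notMem (by rw [mk_doubles_eq_zero_iff.2 hσ]; exact h0T)
    · exact setSign_of_notMem fun h => hσ ((hST σ).2 (Or.inr h))
  · intro σ hσ hσ2
    refine setSign_of_mem (((hST σ).1 hσ).resolve_left fun h => hσ2 ?_)
    exact mk_doubles_eq_zero_iff.1 h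
  · intro α hα β hβ hαβ
    simpa only [Prod.snd_add, QuotientAddGroup.mk_add] using
      hT.setSign_add_of_mem_add doubles_add_self (hR₂ α hα) (hR₂ β hβ) (hR₂ _ hαβ)

/-- For the extended affine root system `R` of type `A₁` and nullity `ν ≥ 1`
determined by the semilattice `S = ⋃ᵢ (τ i + 2Λ)` (with `τ 0 = 0` and the `τ i` pairwise
incongruent mod `2Λ`), under condition (⋆) the prescription
`Φ(±α̇ + 2Λ) = 1`, `Φ(±α̇ + τᵢ + 2Λ) = -1` (`i ≠ 0`), `Φ = 1` on `2Λ ∪ ((S+S) ∖ S)` and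
`Φ = -1` on `S ∖ 2Λ` is a well-defined character for `R`. -/
theorem stmt12 (Λ : Type*) [AddCommGroup Λ] [Module.Free ℤ Λ] [Module.Finite ℤ Λ]
    (hν : 1 ≤ Module.finrank ℤ Λ)
    (m : ℕ) (τ : Fin (m + 1) → Λ) (hτ0 : τ 0 = 0)
    (hincong : ∀ i j : Fin (m + 1), i ≠ j → ¬∃ y : Λ, τ i - τ j = (2 : ℤ) • y)
    (S : Set Λ) (hS : S = {x | ∃ i : Fin (m + 1), ∃ y : Λ, x = τ i + (2 : ℤ) • y})
    (hstar : ∀ I : Finset (Fin (m + 1)), 3 ≤ I.card → I.card ≤ 6 →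
      (0 : Fin (m + 1)) ∉ I → ¬∃ y : Λ, (∑ i ∈ I, τ i) = (2 : ℤ) • y)
    (R : Set (ℤ × Λ))
    (hR : R = {p | (p.1 = 0 ∧ p.2 ∈ S + S) ∨ ((p.1 = 1 ∨ p.1 = -1) ∧ p.2 ∈ S)}) :
    ∃ Φ : ℤ × Λ → ℂˣ,
      (∀ ε : ℤ, ∀ σ : Λ, (ε = 1 ∨ ε = -1) → (∃ y : Λ, σ = (2 : ℤ) • y) →
        Φ (ε, σ) = 1) ∧
      (∀ ε : ℤ, ∀ σ : Λ, (ε = 1 ∨ ε = -1) →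
        (∃ i : Fin (m + 1), i ≠ 0 ∧ ∃ y : Λ, σ = τ i + (2 : ℤ) • y) →
        Φ (ε, σ) = -1) ∧
      (∀ σ ∈ S + S, ((∃ y : Λ, σ = (2 : ℤ) • y) ∨ σ ∉ S) → Φ (0, σ) = 1) ∧
      (∀ σ ∈ S, ¬(∃ y : Λ, σ = (2 : ℤ) • y) → Φ (0, σ) = -1) ∧
      (∀ α ∈ R, ∀ β ∈ R, α + β ∈ R → Φ (α + β) = Φ α * Φ β) :=
  stmt12_general Λ m τ hτ0 hincong S hS hstar R hR
end

section
/- Let Λ = ℤ⁶ with standard basis σ₁, …, σ₆. Set τ₀ = 0, τ_i = σ_i for 1 ≤ i ≤ 6, τ₇ = σ₁ + ⋯ + σ₆, and S := ⋃_{i=0}^{7} (τ_i + 2Λ). In ℤ ⊕ Λ (with α̇ := (1,0)) set R := ({0} ⊕ (S + S)) ∪ {ε·α̇ + σ : ε ∈ {1,−1}, σ ∈ S}. Define Φ : R → {1, −1} by: Φ(±α̇ + σ) = 1 if σ ∈ 2Λ, Φ(±α̇ + σ) = −1 if σ ∈ τ_i + 2Λ for some 1 ≤ i ≤ 7; and for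 σ ∈ S + S, Φ(σ) = 1 if σ ∈ 2Λ or σ ∈ (S + S) ∖ S, and Φ(σ) = −1 if σ ∈ S ∖ 2Λ. Then Φ is a character for R (Φ(α+β) = Φ(α)Φ(β) whenever α, β, α+β ∈ R), but there is no group homomorphism φ : ℤ ⊕ Λ → ℂˣ with φ(α) = Φ(α) for all α ∈ R. In particular, Φ is a character for the extended affine root system R that does not extend to a root-lattice character. -/
/-!
Everything is read modulo `2`. The set `S` is the preimage of the vectors of Hamming weight
`0`, `1` or `6` in `(ZMod 2)⁶`, so `S + S` is the preimage of the weights `0, 1, 2, 5, 6`, and on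
`R` the map `Φ (ε, σ)` depends only on `σ mod 2`: it is `-1` exactly at the weights `1` and `6`.
Over `ZMod 2` the weight of `a + b` is `|a| + |b| - 2k`, where `k` is the overlap of the supports,
so multiplicativity of `Φ` on `R` is a case check on weights. On the other hand a homomorphism `φ`
extending `Φ` would give `φ (0, σ₁ + ⋯ + σ₆) = ∏ φ (0, σᵢ) = (-1)⁶ = 1`, while
`Φ (0, σ₁ + ⋯ + σ₆) = -1`.
-/

open scoped Pointwise

section HammingZModTwo

variable {ι : Type*} [Fintype ι]

lemma ZMod.ne_zero_iff_eq_one {x : ZMod 2} : x ≠ 0 ↔ x = 1 := by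
  revert x; decide

lemma hammingNorm_eq_card_iff_eq_one {v : ι → ZMod 2} :
    hammingNorm v = Fintype.card ι ↔ v = 1 := by
  simp [hammingNorm, Finset.card_eq_iff_eq_univ, Finset.filter_eq_self, funext_iff,
    ZMod.ne_zero_iff_eq_one]

lemma hammingNorm_eq_one_iff_exists_single [DecidableEq ι] {v : ι → ZMod 2} :
    hammingNorm v = 1 ↔ ∃ i, v = Pi.single i 1 := by
  rw [hammingNorm, Finset.card_eq_one]
  refine exists_congr fun i => ⟨fun h => funext fun j => ?_, ?_⟩
  · have hj := Finset.ext_iff.mp h j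
    simp only [Finset.mem_filter, Finset.mem_univ, true_and, Finset.mem_singleton] at hj
    by_cases hji : j = i
    · subst hji
      simpa using ZMod.ne_zero_iff_eq_one.mp (hj.mpr rfl)
    · simpa [hji] using hj
  · rintro rfl
    ext j
    by_cases hji : j = i <;> simp [hji]

/-- `k` is the size of the overlap of the supports of `a` and `b`; over `ZMod 2`, `a + b` is
supported exactly off the overlap. -/
lemma exists_hammingNorm_add (a b : ι → ZMod 2) :
    ∃ k ≤ hammingNorm a, k ≤ hammingNorm b ∧
      hammingNorm a + hammingNorm b ≤ Fintype.card ι + k ∧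
      hammingNorm (a + b) + 2 * k = hammingNorm a + hammingNorm b := by
  classical
  set A := Finset.univ.filter (fun i => a i ≠ 0)
  set B := Finset.univ.filter (fun i => b i ≠ 0)
  have hsupp : Finset.univ.filter (fun i => (a + b) i ≠ 0) = (A ∪ B) \ (A ∩ B) := by
    ext i
    simp only [A, B, Finset.mem_filter, Finset.mem_univ, true_and, Finset.mem_sdiff,
      Finset.mem_union, Finset.mem_inter, Pi.add_apply]
    generalize a i = x; generalize b i = y
    revert x y; decide
  have hunion := Finset.card_union_add_card_inter A B
  have hsdiff := Finset.card_sdiff_of_subset (Finset.inter_subset_union (s := A) (t := B))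
  have hinter := Finset.card_le_card (Finset.inter_subset_union (s := A) (t := B))
  have huniv := Finset.card_le_univ (A ∪ B)
  refine ⟨(A ∩ B).card, Finset.card_le_card Finset.inter_subset_left,
    Finset.card_le_card Finset.inter_subset_right, ?_, ?_⟩
  · change A.card + B.card ≤ _
    omega
  · change (Finset.univ.filter (fun i => (a + b) i ≠ 0)).card + _ = A.card + B.card
    rw [hsupp]
    omega

end HammingZModTwo

lemma map_sum_of_map_add {ι A G : Type*} [AddCommMonoid A] [CommGroup G] {f : A → G}
    (hf : ∀ x y, f (x + y) = f x * f y) (s : Finset ι) (g : ι → A) :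
    f (∑ i ∈ s, g i) = ∏ i ∈ s, f (g i) := by
  classical
  have h0 : f 0 = 1 := (left_eq_mul (a := f 0)).mp (by rw [← hf, add_zero])
  induction s using Finset.induction_on with
  | empty => simpa using h0
  | insert i s hi ih => rw [Finset.sum_insert hi, Finset.prod_insert hi, hf, ih]

lemma map_one_eq_prod_map_single {ι G : Type*} [Fintype ι] [DecidableEq ι] [CommGroup G]
    {f : (ι → ℤ) → G} (hf : ∀ x y, f (x + y) = f x * f y) :
    f 1 = ∏ i, f (Pi.single i 1) := by
  rw [← map_sum_of_map_add hf]
  exact congrArg f (Finset.univ_sum_single 1).symm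

namespace NonextendableCharacter

variable (ι : Type*)

def modTwo : (ι → ℤ) →+ (ι → ZMod 2) := (Int.castAddHom (ZMod 2)).compLeft ι

variable {ι}

@[simp]
lemma modTwo_apply (x : ι → ℤ) (i : ι) : modTwo ι x i = x i := rfl

lemma modTwo_eq_zero_iff {x : ι → ℤ} : modTwo ι x = 0 ↔ ∃ y, x = (2 : ℤ) • y := by
  simp only [funext_iff, modTwo_apply, Pi.zero_apply, ZMod.intCast_zmod_eq_zero_iff_dvd,
    Nat.cast_ofNat, Pi.smul_apply, smul_eq_mul]
  exact ⟨fun h => ⟨fun i => x i / 2, fun i => (Int.mul_ediv_cancel' (h i)).symm⟩,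
    fun ⟨y, hy⟩ i => ⟨y i, hy i⟩⟩

lemma modTwo_eq_modTwo_iff {x r : ι → ℤ} :
    modTwo ι x = modTwo ι r ↔ ∃ y, x = r + (2 : ℤ) • y := by
  simp only [← sub_eq_zero (a := modTwo ι x), ← map_sub, modTwo_eq_zero_iff,
    sub_eq_iff_eq_add']

@[simp]
lemma modTwo_single [DecidableEq ι] (i : ι) : modTwo ι (Pi.single i 1) = Pi.single i 1 := by
  ext j; by_cases h : j = i <;> simp [h]

@[simp]
lemma modTwo_one : modTwo ι 1 = 1 := by
  ext; simp

section Semilattice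

variable (ι) [DecidableEq ι]

def S : Set (ι → ℤ) :=
  {x | (∃ y, x = (2 : ℤ) • y) ∨
    (∃ i : ι, ∃ y, x = Pi.single i 1 + (2 : ℤ) • y) ∨
    (∃ y, x = (fun _ => 1) + (2 : ℤ) • y)}

def R : Set (ℤ × (ι → ℤ)) :=
  {p | (p.1 = 0 ∧ p.2 ∈ S ι + S ι) ∨ ((p.1 = 1 ∨ p.1 = -1) ∧ p.2 ∈ S ι)}

variable {ι}

lemma zero_mem_S : (0 : ι → ℤ) ∈ S ι := .inl ⟨0, by simp⟩

lemma S_subset_add : S ι ⊆ S ι + S ι :=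
  fun x hx => ⟨x, hx, 0, zero_mem_S, add_zero x⟩

lemma snd_mem_add_of_mem_R {α : ℤ × (ι → ℤ)} (hα : α ∈ R ι) : α.2 ∈ S ι + S ι := by
  rcases hα with ⟨-, h⟩ | ⟨-, h⟩
  exacts [h, S_subset_add h]

lemma single_mem_S (i : ι) : Pi.single i 1 ∈ S ι := .inr <| .inl ⟨i, 0, by simp⟩

lemma one_mem_S : (1 : ι → ℤ) ∈ S ι := .inr <| .inr ⟨0, by simp [Pi.one_def]⟩

variable [Fintype ι]

lemma mem_S_iff {x : ι → ℤ} :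
    x ∈ S ι ↔ hammingNorm (modTwo ι x) = 0 ∨ hammingNorm (modTwo ι x) = 1 ∨
      hammingNorm (modTwo ι x) = Fintype.card ι := by
  simp only [hammingNorm_eq_zero, hammingNorm_eq_one_iff_exists_single,
    hammingNorm_eq_card_iff_eq_one, modTwo_eq_zero_iff, ← modTwo_single, ← modTwo_one,
    modTwo_eq_modTwo_iff]
  rfl

lemma hammingNorm_modTwo_of_mem_add {x : ι → ℤ} (hx : x ∈ S ι + S ι) :
    hammingNorm (modTwo ι x) = 0 ∨ hammingNorm (modTwo ι x) = 1 ∨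
      hammingNorm (modTwo ι x) = 2 ∨ hammingNorm (modTwo ι x) + 1 = Fintype.card ι ∨
      hammingNorm (modTwo ι x) = Fintype.card ι := by
  obtain ⟨a, ha, b, hb, rfl⟩ := hx
  obtain ⟨k, hka, hkb, hcard, hab⟩ := exists_hammingNorm_add (modTwo ι a) (modTwo ι b)
  rw [mem_S_iff] at ha hb
  rw [map_add]
  omega

end Semilattice

section Character

variable [Fintype ι]

def phiBar (v : ι → ZMod 2) : ℂˣ :=
  if hammingNorm v = 1 ∨ hammingNorm v = Fintype.card ι then -1 else 1

variable [DecidableEq ι]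

lemma phiBar_modTwo_add (hι : 5 ≤ Fintype.card ι) {x y : ι → ℤ} (hx : x ∈ S ι + S ι)
    (hy : y ∈ S ι + S ι) (hxy : x + y ∈ S ι + S ι) :
    phiBar (modTwo ι (x + y)) = phiBar (modTwo ι x) * phiBar (modTwo ι y) := by
  have wx := hammingNorm_modTwo_of_mem_add hx
  have wy := hammingNorm_modTwo_of_mem_add hy
  have wxy := hammingNorm_modTwo_of_mem_add hxy
  obtain ⟨k, hkx, hky, hcard, hsum⟩ := exists_hammingNorm_add (modTwo ι x) (modTwo ι y)
  rw [map_add] at wxy ⊢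
  unfold phiBar
  split_ifs <;> simp <;> omega

lemma phiBar_modTwo_map_add (hι : 5 ≤ Fintype.card ι) {α β : ℤ × (ι → ℤ)} (hα : α ∈ R ι)
    (hβ : β ∈ R ι) (hαβ : α + β ∈ R ι) :
    phiBar (modTwo ι (α + β).2) = phiBar (modTwo ι α.2) * phiBar (modTwo ι β.2) :=
  phiBar_modTwo_add hι (snd_mem_add_of_mem_R hα) (snd_mem_add_of_mem_R hβ)
    (snd_mem_add_of_mem_R hαβ)

omit [DecidableEq ι] in
lemma phiBar_modTwo_of_even [Nonempty ι] {x : ι → ℤ} (hx : ∃ y, x = (2 : ℤ) • y) :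
    phiBar (modTwo ι x) = 1 := by
  rw [← modTwo_eq_zero_iff] at hx
  simp [phiBar, hx, Fintype.card_ne_zero.symm]

lemma phiBar_modTwo_of_mem_S_of_not_even {x : ι → ℤ} (hS : x ∈ S ι)
    (hx : ¬∃ y, x = (2 : ℤ) • y) : phiBar (modTwo ι x) = -1 := by
  rw [← modTwo_eq_zero_iff, ← hammingNorm_eq_zero] at hx
  rw [mem_S_iff] at hS
  simp only [phiBar, if_pos (hS.resolve_left hx)]

lemma phiBar_modTwo_of_not_mem_S {x : ι → ℤ} (hS : x ∉ S ι) : phiBar (modTwo ι x) = 1 := by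
  rw [mem_S_iff] at hS
  rw [phiBar, if_neg (by tauto)]

@[simp]
lemma phiBar_single (i : ι) : phiBar (Pi.single i 1 : ι → ZMod 2) = -1 := by
  rw [phiBar, if_pos (.inl (hammingNorm_eq_one_iff_exists_single.mpr ⟨i, rfl⟩))]

omit [DecidableEq ι] in
@[simp]
lemma phiBar_one : phiBar (1 : ι → ZMod 2) = -1 := by
  simp [phiBar, hammingNorm_eq_card_iff_eq_one]

end Character

end NonextendableCharacter

open NonextendableCharacter in
/-- With `Λ = ℤ⁶`, `τ₀ = 0`, `τᵢ = σᵢ` (`1 ≤ i ≤ 6`), `τ₇ = σ₁ + ⋯ + σ₆`,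
`S = ⋃ᵢ (τᵢ + 2Λ)` and the type-`A₁` extended affine root system
`R = ({0} ⊕ (S+S)) ∪ (±α̇ + S)` in `ℤ ⊕ Λ`, the map `Φ` defined by `Φ(±α̇ + σ) = 1` for
`σ ∈ 2Λ`, `Φ(±α̇ + σ) = -1` for `σ ∈ S ∖ 2Λ`, `Φ = 1` on `2Λ ∪ ((S+S) ∖ S)` and `Φ = -1` on
`S ∖ 2Λ`, is a character for `R` that does not extend to a root-lattice character. -/
theorem stmt13
    (S : Set (Fin 6 → ℤ))
    (hS : S = {x | (∃ y, x = (2 : ℤ) • y) ∨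
      (∃ i : Fin 6, ∃ y, x = Pi.single i 1 + (2 : ℤ) • y) ∨
      (∃ y, x = (fun _ => 1) + (2 : ℤ) • y)})
    (R : Set (ℤ × (Fin 6 → ℤ)))
    (hR : R = {p | (p.1 = 0 ∧ p.2 ∈ S + S) ∨ ((p.1 = 1 ∨ p.1 = -1) ∧ p.2 ∈ S)})
    (Φ : ℤ × (Fin 6 → ℤ) → ℂˣ)
    (hΦ1 : ∀ ε : ℤ, ∀ σ : Fin 6 → ℤ, (ε = 1 ∨ ε = -1) →
      (∃ y, σ = (2 : ℤ) • y) → Φ (ε, σ) = 1)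
    (hΦ2 : ∀ ε : ℤ, ∀ σ : Fin 6 → ℤ, (ε = 1 ∨ ε = -1) → σ ∈ S →
      ¬(∃ y, σ = (2 : ℤ) • y) → Φ (ε, σ) = -1)
    (hΦ3 : ∀ σ ∈ S + S, ((∃ y, σ = (2 : ℤ) • y) ∨ σ ∉ S) → Φ (0, σ) = 1)
    (hΦ4 : ∀ σ ∈ S, ¬(∃ y, σ = (2 : ℤ) • y) → Φ (0, σ) = -1) :
    (∀ α ∈ R, ∀ β ∈ R, α + β ∈ R → Φ (α + β) = Φ α * Φ β) ∧
    ¬∃ φ : ℤ × (Fin 6 → ℤ) → ℂˣ,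
      (∀ x y : ℤ × (Fin 6 → ℤ), φ (x + y) = φ x * φ y) ∧ (∀ α ∈ R, φ α = Φ α) := by
  obtain rfl : S = NonextendableCharacter.S (Fin 6) := hS
  obtain rfl : R = NonextendableCharacter.R (Fin 6) := hR
  have hΦ : ∀ α ∈ R (Fin 6), Φ α = phiBar (modTwo _ α.2) := by
    rintro ⟨ε, σ⟩ (⟨rfl, hσ⟩ | ⟨hε, hσ⟩) <;> by_cases hev : ∃ y, σ = (2 : ℤ) • y
    · rw [hΦ3 σ hσ (.inl hev), phiBar_modTwo_of_even hev]
    · by_cases hσS : σ ∈ S (Fin 6)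
      · rw [hΦ4 σ hσS hev, phiBar_modTwo_of_mem_S_of_not_even hσS hev]
      · rw [hΦ3 σ hσ (.inr hσS), phiBar_modTwo_of_not_mem_S hσS]
    · rw [hΦ1 ε σ hε hev, phiBar_modTwo_of_even hev]
    · rw [hΦ2 ε σ hε hσ hev, phiBar_modTwo_of_mem_S_of_not_even hσ hev]
  refine ⟨fun α hα β hβ hαβ => ?_, fun ⟨φ, hφ, hφΦ⟩ => ?_⟩
  · rw [hΦ _ hα, hΦ _ hβ, hΦ _ hαβ]
    exact phiBar_modTwo_map_add (by simp) hα hβ hαβ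
  · have hφS : ∀ x ∈ S (Fin 6), φ (0, x) = phiBar (modTwo _ x) := fun x hx =>
      (hφΦ _ (.inl ⟨rfl, S_subset_add hx⟩)).trans (hΦ _ (.inl ⟨rfl, S_subset_add hx⟩))
    have h := map_one_eq_prod_map_single (f := fun x => φ (0, x))
      (fun x y => by rw [← hφ, Prod.mk_add_mk, add_zero])
    simp only [hφS _ one_mem_S, hφS _ (single_mem_S _), modTwo_one, phiBar_one, modTwo_single,
      phiBar_single, Finset.prod_const, Finset.card_univ, Fintype.card_fin] at h
    norm_num at h
end

section
/- Let L be a Lie algebra over ℂ and let I be a Lie ideal of L whose centralizer in L is contained in I. Suppose I is generated as a Lie subalgebra by elements e_j, f_j (j ∈ J), where for each j there is h_j ∈ L with ⁅e_j, f_j⁆ = h_j, ⁅h_j, e_j⁆ = 2e_j, ⁅h_j, f_j⁆ = −2f_j and e_j ≠ 0. Let H be a subspace of L such that for each j ∈ J there is a linear functional α_j on H with ⁅h, e_j⁆ = α_j(h)·e_j and ⁅h, f_j⁆ = −α_j(h)·f_j for all h ∈ H. Let τ be a Lie algebra automorphism of L such that for every j, τ(e_j) is a scalar multiple of f_j and τ(f_j)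 is a scalar multiple of e_j. Then for every h ∈ H, the element h + τ(h) lies in the center of I. -/
/-!
Write `z = x + τ x`. Since `τ` swaps the lines `ℂ e_j` and `ℂ f_j`, it turns the eigenvalue
`-α_j(x)` of `ad x` on `f_j` into the eigenvalue `-α_j(x)` of `ad (τ x)` on `e_j`, so the two
summands of `⁅z, e_j⁆` cancel, and likewise for `f_j`. Elements commuting with `z` form a
Lie subalgebra, so `z` centralizes the Lie algebra `I` generated by the `e_j, f_j`; as the
centralizer of `I` lies in `I`, `z` is central in `I`.
-/

theorem LieSubalgebra.lie_eq_zero_of_mem_lieSpan {R L : Type*} [CommRing R] [LieRing L]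
    [LieAlgebra R L] {s : Set L} {z y : L} (hs : ∀ u ∈ s, ⁅z, u⁆ = 0)
    (hy : y ∈ LieSubalgebra.lieSpan R L s) : ⁅z, y⁆ = 0 := by
  induction hy using LieSubalgebra.lieSpan_induction with
  | mem u hu => exact hs u hu
  | zero => exact lie_zero z
  | add u v _ _ hu hv => rw [lie_add, hu, hv, add_zero]
  | smul t u _ hu => rw [lie_smul, hu, smul_zero]
  | lie u v _ _ hu hv => rw [leibniz_lie, hu, hv, zero_lie, lie_zero, add_zero]

section Field

variable {K L L' : Type*} [Field K] [LieRing L] [LieAlgebra K L] [LieRing L'] [LieAlgebra K L']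

theorem LieHom.lie_map_eq_smul_of_map_eq_smul (τ : L →ₗ⁅K⁆ L') {x u : L} {v : L'} {μ c : K}
    (hc : c ≠ 0) (hu : ⁅x, u⁆ = μ • u) (hτu : τ u = c • v) : ⁅τ x, v⁆ = μ • v := by
  apply smul_right_injective L' hc
  calc c • ⁅τ x, v⁆ = ⁅τ x, τ u⁆ := by rw [hτu, lie_smul]
    _ = τ (μ • u) := by rw [← LieHom.map_lie, hu]
    _ = c • μ • v := by rw [map_smul, hτu, smul_comm]

theorem LieEquiv.lie_add_map_eq_zero_of_swap (τ : L ≃ₗ⁅K⁆ L) {x e f : L} {μ c d : K}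
    (he : e ≠ 0) (hxe : ⁅x, e⁆ = μ • e) (hxf : ⁅x, f⁆ = -μ • f)
    (hτe : τ e = c • f) (hτf : τ f = d • e) : ⁅x + τ x, e⁆ = 0 ∧ ⁅x + τ x, f⁆ = 0 := by
  have hτe_ne : c • f ≠ 0 := hτe ▸ (map_ne_zero_iff τ τ.injective).mpr he
  have hc : c ≠ 0 := left_ne_zero_of_smul hτe_ne
  have hd : d ≠ 0 := by
    rintro rfl
    rw [zero_smul, map_eq_zero_iff τ τ.injective] at hτf
    exact hτe_ne (by rw [hτf, smul_zero])
  have hτxe : ⁅τ x, e⁆ = -μ • e := τ.toLieHom.lie_map_eq_smul_of_map_eq_smul hd hxf hτf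
  have hτxf : ⁅τ x, f⁆ = μ • f := τ.toLieHom.lie_map_eq_smul_of_map_eq_smul hc hxe hτe
  constructor
  · rw [add_lie, hxe, hτxe, ← add_smul, add_neg_cancel, zero_smul]
  · rw [add_lie, hxf, hτxf, ← add_smul, neg_add_cancel, zero_smul]

end Field

theorem stmt14_general (L : Type*) [LieRing L] [LieAlgebra ℂ L] (I : LieIdeal ℂ L)
    (hcent : ∀ x : L, (∀ y ∈ I, ⁅x, y⁆ = 0) → x ∈ I)
    (J : Type*) (e f : J → L)
    (hgen : ∀ x : L, x ∈ I ↔ x ∈ LieSubalgebra.lieSpan ℂ L (Set.range e ∪ Set.range f))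
    (hne : ∀ j, e j ≠ 0)
    (H : Submodule ℂ L) (α : J → (H →ₗ[ℂ] ℂ))
    (hHe : ∀ j, ∀ x : H, ⁅(x : L), e j⁆ = α j x • e j)
    (hHf : ∀ j, ∀ x : H, ⁅(x : L), f j⁆ = -(α j x) • f j)
    (τ : L ≃ₗ⁅ℂ⁆ L)
    (hτe : ∀ j, ∃ c : ℂ, τ (e j) = c • f j)
    (hτf : ∀ j, ∃ c : ℂ, τ (f j) = c • e j) :
    ∀ x : H, ((x : L) + τ x) ∈ I ∧ ∀ y ∈ I, ⁅(x : L) + τ x, y⁆ = 0 := by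
  intro x
  have hgens : ∀ j, ⁅(x : L) + τ x, e j⁆ = 0 ∧ ⁅(x : L) + τ x, f j⁆ = 0 := fun j ↦ by
    obtain ⟨c, hc⟩ := hτe j
    obtain ⟨d, hd⟩ := hτf j
    exact τ.lie_add_map_eq_zero_of_swap (hne j) (hHe j x) (hHf j x) hc hd
  have hI : ∀ y ∈ I, ⁅(x : L) + τ x, y⁆ = 0 := fun y hy ↦
    LieSubalgebra.lie_eq_zero_of_mem_lieSpan
      (by rintro _ (⟨j, rfl⟩ | ⟨j, rfl⟩); exacts [(hgens j).1, (hgens j).2]) ((hgen y).mp hy)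
  exact ⟨hcent _ hI, hI⟩

/-- Let `I` be a Lie ideal of a complex Lie algebra `L` whose centralizer is
contained in `I`, generated as a Lie subalgebra by `sl₂`-triple elements `e j, f j` which are
eigenvectors for a subspace `H` with eigenvalues `± α j`.  If `τ` is an automorphism of `L`
exchanging each `e j` and `f j` up to scalars, then `h + τ h` lies in the center of `I` for
every `h ∈ H`. -/
theorem stmt14 (L : Type*) [LieRing L] [LieAlgebra ℂ L] (I : LieIdeal ℂ L)
    (hcent : ∀ x : L, (∀ y ∈ I, ⁅x, y⁆ = 0) → x ∈ I)
    (J : Type*) (e f h : J → L)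
    (hgen : ∀ x : L, x ∈ I ↔ x ∈ LieSubalgebra.lieSpan ℂ L (Set.range e ∪ Set.range f))
    (hne : ∀ j, e j ≠ 0)
    (hef : ∀ j, ⁅e j, f j⁆ = h j)
    (hhe : ∀ j, ⁅h j, e j⁆ = (2 : ℂ) • e j)
    (hhf : ∀ j, ⁅h j, f j⁆ = (-2 : ℂ) • f j)
    (H : Submodule ℂ L) (α : J → (H →ₗ[ℂ] ℂ))
    (hHe : ∀ j, ∀ x : H, ⁅(x : L), e j⁆ = α j x • e j)
    (hHf : ∀ j, ∀ x : H, ⁅(x : L), f j⁆ = -(α j x) • f j)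
    (τ : L ≃ₗ⁅ℂ⁆ L)
    (hτe : ∀ j, ∃ c : ℂ, τ (e j) = c • f j)
    (hτf : ∀ j, ∃ c : ℂ, τ (f j) = c • e j) :
    ∀ x : H, ((x : L) + τ x) ∈ I ∧ ∀ y ∈ I, ⁅(x : L) + τ x, y⁆ = 0 :=
  stmt14_general L I hcent J e f hgen hne H α hHe hHf τ hτe hτf
end
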